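/- arXiv:1707.01702 — 7 statements merged into one kernel-verified Lean document; each statement's English description precedes it below -/
import Mathlib

section
/- Let U be a finite universe with |U| = n ≥ 3, let 𝒞 be a finite collection of subsets of U with costs c(S) ≥ 0, and let π be a probability distribution on the subsets of U. Suppose nonnegative reals (y^S_B)_{S∈𝒞, B⊆S} satisfy: (i) for every u ∈ U, ∑_{S∈𝒞} ∑_{B⊆S, u∈B} y^S_B ≥ 1, and (ii) for every S ∈ 𝒞, ∑_{B⊆S} y^S_B = 1. Then there exists a mapping φ : U → 𝒞 with u ∈ φ(u) for all u ∈ U such that ∑_{S∈𝒞} c(S)·g_π(φ⁻¹(S)) ≤ 4·ln n · ∑_{S∈𝒞} c(S) ∑_{B⊆S} y^S_B · g_π(B). -/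
open Finset

/-!
Randomized rounding. Over `T = ⌈ln n⌉` rounds every `S ∈ 𝒞` draws a set `B ⊆ S` from `y^S`,
independently, and an element lying in some draw is mapped to a set that drew it. Since `g_π` is
subadditive and monotone, the cost of `S` is at most `c(S)` times the sum of `g_π` over its
draws, of expectation `T` times the LP value. By feasibility, an element is missed by all draws
with probability at most `∏ (1 - p_i) ≤ e^{-T} ≤ 1/n`; it is then mapped to a set `S ∋ u` with
`c(S) g_π({u})` at most the LP's share of `u`, and these shares add up to at most `n` times
the LP value. So the expected cost is at most `(ln n + 2)` times the LP value, and some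
outcome of the draws is no worse than the expectation.
-/

noncomputable def gpi {U : Type*} [Fintype U] [DecidableEq U]
    (π : Finset U → ℝ) (B : Finset U) : ℝ :=
  ∑ X ∈ Finset.univ.filter (fun X : Finset U => (X ∩ B).Nonempty), π X

theorem exists_le_sum_mul_of_one_le_sum {ι : Type*} {s : Finset ι} {w v : ι → ℝ}
    (hw : ∀ i ∈ s, 0 ≤ w i) (hw1 : 1 ≤ ∑ i ∈ s, w i) (hv : ∀ i ∈ s, 0 ≤ v i) :
    ∃ i ∈ s, v i ≤ ∑ i ∈ s, w i * v i := by
  have hs : s.Nonempty := by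
    by_contra h
    simp only [not_nonempty_iff_eq_empty.mp h, sum_empty] at hw1
    linarith
  obtain ⟨j, hj, hmin⟩ := exists_min_image s v hs
  refine ⟨j, hj, ?_⟩
  calc v j ≤ (∑ i ∈ s, w i) * v j := le_mul_of_one_le_left (hv j hj) hw1
    _ = ∑ i ∈ s, w i * v j := sum_mul ..
    _ ≤ ∑ i ∈ s, w i * v i :=
      sum_le_sum fun i hi => mul_le_mul_of_nonneg_left (hmin i hi) (hw i hi)

theorem prod_one_sub_le_exp_neg_sum {ι : Type*} (s : Finset ι) {p : ι → ℝ}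
    (hp : ∀ i ∈ s, p i ≤ 1) : ∏ i ∈ s, (1 - p i) ≤ Real.exp (-∑ i ∈ s, p i) := by
  rw [← sum_neg_distrib, Real.exp_sum]
  exact prod_le_prod (fun i hi => sub_nonneg.mpr (hp i hi))
    fun i _ => Real.one_sub_le_exp_neg (p i)

theorem sum_subtype_prod_fin {β : Type*} (𝒞 : Finset β) (T : ℕ) (F : β → ℝ) :
    ∑ i : 𝒞 × Fin T, F i.1 = T * ∑ S ∈ 𝒞, F S := by
  simp [Fintype.sum_prod_type, mul_sum, sum_attach 𝒞 fun S => T * F S]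

section ProductWeight

variable {ι α : Type*} [Fintype ι] (q : ι → α → ℝ)

def prodWeight (ω : ι → α) : ℝ := ∏ i, q i (ω i)

variable {q}

theorem prodWeight_nonneg (hq : ∀ i a, 0 ≤ q i a) (ω : ι → α) : 0 ≤ prodWeight q ω :=
  prod_nonneg fun i _ => hq i (ω i)

variable [DecidableEq ι] [Fintype α]

theorem sum_prodWeight_mul_prod (g : ι → α → ℝ) :
    ∑ ω, prodWeight q ω * ∏ i, g i (ω i) = ∏ i, ∑ a, q i a * g i a := by
  simp only [prodWeight, ← prod_mul_distrib, Fintype.prod_sum]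

theorem sum_prodWeight (hq : ∀ i, ∑ a, q i a = 1) : ∑ ω, prodWeight q ω = 1 := by
  simpa [hq] using sum_prodWeight_mul_prod (q := q) fun _ _ => 1

theorem sum_prodWeight_mul_apply (hq : ∀ i, ∑ a, q i a = 1) (i₀ : ι) (h : α → ℝ) :
    ∑ ω, prodWeight q ω * h (ω i₀) = ∑ a, q i₀ a * h a := by
  have := sum_prodWeight_mul_prod (q := q) fun i a => if i = i₀ then h a else 1
  simp only [prod_ite_eq', mem_univ, if_true, mul_ite, mul_one] at this
  rw [this, prod_eq_single i₀ (fun i _ hi => by simp [hi, hq]) (by simp)]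
  simp

theorem sum_prodWeight_mul_ite_forall_notMem_le [DecidableEq α] (hq0 : ∀ i a, 0 ≤ q i a)
    (hq : ∀ i, ∑ a, q i a = 1) (E : ι → Finset α) :
    ∑ ω, prodWeight q ω * (if ∀ i, ω i ∉ E i then 1 else 0) ≤
      Real.exp (-∑ i, ∑ a ∈ E i, q i a) := by
  have hmiss : ∀ i, ∑ a, q i a * (if a ∉ E i then 1 else 0) = 1 - ∑ a ∈ E i, q i a := by
    intro i
    simp only [mul_ite, mul_one, mul_zero]
    rw [eq_sub_iff_add_eq, ← hq i, ← sum_filter, ← sum_filter_not_add_sum_filter univ (· ∈ E i)]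
    simp
  calc _ = ∏ i, ∑ a, q i a * (if a ∉ E i then 1 else 0) := by
        rw [← sum_prodWeight_mul_prod]; simp only [Fintype.prod_boole]
    _ = ∏ i, (1 - ∑ a ∈ E i, q i a) := by simp only [hmiss]
    _ ≤ _ := prod_one_sub_le_exp_neg_sum _ fun i _ =>
        hq i ▸ sum_le_sum_of_subset_of_nonneg (subset_univ _) fun a _ _ => hq0 i a

end ProductWeight

section HittingProbability

variable {U : Type*} [Fintype U] [DecidableEq U] {π : Finset U → ℝ}

theorem gpi_nonneg (hπ : ∀ X, 0 ≤ π X) (B : Finset U) : 0 ≤ gpi π B :=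
  sum_nonneg fun X _ => hπ X

theorem gpi_mono (hπ : ∀ X, 0 ≤ π X) {A B : Finset U} (h : A ⊆ B) : gpi π A ≤ gpi π B :=
  sum_le_sum_of_subset_of_nonneg
    (monotone_filter_right _ fun _ _ hX => hX.mono (inter_subset_inter subset_rfl h))
    fun X _ _ => hπ X

theorem gpi_empty : gpi π (∅ : Finset U) = 0 := by
  simp [gpi]

theorem gpi_union_le (hπ : ∀ X, 0 ≤ π X) (A B : Finset U) :
    gpi π (A ∪ B) ≤ gpi π A + gpi π B := by
  have hsub : univ.filter (fun X : Finset U => (X ∩ (A ∪ B)).Nonempty) ⊆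
      univ.filter (fun X : Finset U => (X ∩ A).Nonempty) ∪
        univ.filter (fun X : Finset U => (X ∩ B).Nonempty) := by
    intro X
    simp [inter_union_distrib_left, union_nonempty]
  calc gpi π (A ∪ B) ≤ ∑ X ∈ _ ∪ _, π X := sum_le_sum_of_subset_of_nonneg hsub fun X _ _ => hπ X
    _ ≤ ∑ X ∈ _ ∪ _, π X + ∑ X ∈ _ ∩ _, π X := le_add_of_nonneg_right (sum_nonneg fun X _ => hπ X)
    _ = gpi π A + gpi π B := sum_union_inter

theorem gpi_sup_le (hπ : ∀ X, 0 ≤ π X) {ι : Type*} (t : Finset ι) (A : ι → Finset U) :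
    gpi π (t.sup A) ≤ ∑ i ∈ t, gpi π (A i) :=
  apply_sup_le_sum gpi_empty (gpi_union_le hπ _ _) t

theorem gpi_le_sum_singleton (hπ : ∀ X, 0 ≤ π X) (A : Finset U) :
    gpi π A ≤ ∑ u ∈ A, gpi π {u} := by
  simpa [sup_singleton_eq_self] using gpi_sup_le hπ A singleton

end HittingProbability

section CoverMap

variable {U ι : Type*} [DecidableEq U] [Fintype ι]

noncomputable def coverMap (lab A : ι → Finset U) (f : U → Finset U) (u : U) : Finset U :=
  if h : ∃ i, u ∈ A i then lab h.choose else f u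

variable {lab A : ι → Finset U} {f : U → Finset U}

theorem coverMap_mem {𝒞 : Finset (Finset U)} (hA : ∀ i, A i ⊆ lab i) (hlab : ∀ i, lab i ∈ 𝒞)
    (hf : ∀ u, f u ∈ 𝒞 ∧ u ∈ f u) (u : U) :
    coverMap lab A f u ∈ 𝒞 ∧ u ∈ coverMap lab A f u := by
  unfold coverMap
  split_ifs with h
  · exact ⟨hlab _, hA _ h.choose_spec⟩
  · exact hf u

variable [Fintype U]

noncomputable def mapCost (𝒞 : Finset (Finset U)) (c : Finset U → ℝ) (π : Finset U → ℝ)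
    (φ : U → Finset U) : ℝ :=
  ∑ S ∈ 𝒞, c S * gpi π (univ.filter (φ · = S))

theorem filter_coverMap_eq_subset (S : Finset U) :
    univ.filter (coverMap lab A f · = S) ⊆
      (univ.filter (lab · = S)).sup A ∪ (univ.filter fun u => ∀ i, u ∉ A i).filter (f · = S) := by
  intro u hu
  rw [mem_filter] at hu
  unfold coverMap at hu
  split_ifs at hu with h
  · exact mem_union_left _ (mem_sup.2 ⟨h.choose, by simpa using hu, h.choose_spec⟩)
  · exact mem_union_right _ (by simpa [hu] using h)

theorem mapCost_coverMap_le {𝒞 : Finset (Finset U)} {c π : Finset U → ℝ} (hπ : ∀ X, 0 ≤ π X)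
    (hc : ∀ S ∈ 𝒞, 0 ≤ c S) (hlab : ∀ i, lab i ∈ 𝒞) (hf : ∀ u, f u ∈ 𝒞) :
    mapCost 𝒞 c π (coverMap lab A f) ≤
      ∑ i, c (lab i) * gpi π (A i) + ∑ u with ∀ i, u ∉ A i, c (f u) * gpi π {u} := by
  have hS : ∀ S ∈ 𝒞, c S * gpi π (univ.filter (coverMap lab A f · = S)) ≤
      ∑ i with lab i = S, c (lab i) * gpi π (A i) +
        ∑ u ∈ (univ.filter fun u => ∀ i, u ∉ A i) with f u = S, c (f u) * gpi π {u} := by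
    intro S hS
    calc _ ≤ c S * (∑ i with lab i = S, gpi π (A i) +
            ∑ u ∈ (univ.filter fun u => ∀ i, u ∉ A i) with f u = S, gpi π {u}) := by
          refine mul_le_mul_of_nonneg_left ?_ (hc S hS)
          refine (gpi_mono hπ (filter_coverMap_eq_subset S)).trans ?_
          exact (gpi_union_le hπ _ _).trans
            (add_le_add (gpi_sup_le hπ _ _) (gpi_le_sum_singleton hπ _))
      _ = _ := by
          rw [mul_add, mul_sum, mul_sum]
          congr 1 <;> refine sum_congr rfl fun x hx => ?_ <;> rw [(mem_filter.1 hx).2]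
  refine (sum_le_sum hS).trans_eq ?_
  rw [sum_add_distrib, sum_fiberwise_of_maps_to fun i _ => hlab i,
    sum_fiberwise_of_maps_to fun u _ => hf u]

end CoverMap

section Fallback

variable {U : Type*} [Fintype U] [DecidableEq U] {𝒞 : Finset (Finset U)}
  {c π : Finset U → ℝ} {y : Finset U → Finset U → ℝ}

noncomputable def lpCost (𝒞 : Finset (Finset U)) (c π : Finset U → ℝ)
    (y : Finset U → Finset U → ℝ) : ℝ :=
  ∑ S ∈ 𝒞, c S * ∑ B ∈ S.powerset, y S B * gpi π B

theorem lpCost_nonneg (hπ : ∀ X, 0 ≤ π X) (hc : ∀ S ∈ 𝒞, 0 ≤ c S) (hy : ∀ S B, 0 ≤ y S B) :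
    0 ≤ lpCost 𝒞 c π y :=
  sum_nonneg fun S hS =>
    mul_nonneg (hc S hS) (sum_nonneg fun B _ => mul_nonneg (hy S B) (gpi_nonneg hπ B))

theorem exists_mem_cost_singleton_le (hπ : ∀ X, 0 ≤ π X) (hc : ∀ S ∈ 𝒞, 0 ≤ c S)
    (hy : ∀ S B, 0 ≤ y S B) {u : U}
    (hfeas : 1 ≤ ∑ S ∈ 𝒞, ∑ B ∈ S.powerset.filter (fun B : Finset U => u ∈ B), y S B) :
    ∃ S ∈ 𝒞, u ∈ S ∧
      c S * gpi π {u} ≤ ∑ S ∈ 𝒞, ∑ B ∈ S.powerset with u ∈ B, y S B * (c S * gpi π B) := by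
  obtain ⟨⟨S, B⟩, hSB, hle⟩ := exists_le_sum_mul_of_one_le_sum
    (s := 𝒞.sigma fun S => S.powerset.filter (u ∈ ·)) (w := fun p => y p.1 p.2)
    (v := fun p => c p.1 * gpi π {u}) (fun p _ => hy _ _) (by rwa [sum_sigma])
    (fun p hp => mul_nonneg (hc _ (mem_sigma.1 hp).1) (gpi_nonneg hπ _))
  simp only [mem_sigma, mem_filter, mem_powerset] at hSB
  refine ⟨S, hSB.1, hSB.2.1 hSB.2.2, hle.trans ?_⟩
  rw [sum_sigma]
  gcongr with S hS B hB
  · exact hy _ _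
  · exact hc S hS
  · exact gpi_mono hπ (singleton_subset_iff.2 (mem_filter.1 hB).2)

theorem exists_fallback (hπ : ∀ X, 0 ≤ π X) (hc : ∀ S ∈ 𝒞, 0 ≤ c S) (hy : ∀ S B, 0 ≤ y S B)
    (hfeas : ∀ u : U,
      1 ≤ ∑ S ∈ 𝒞, ∑ B ∈ S.powerset.filter (fun B : Finset U => u ∈ B), y S B) :
    ∃ f : U → Finset U, (∀ u, f u ∈ 𝒞 ∧ u ∈ f u) ∧
      ∑ u, c (f u) * gpi π {u} ≤ Fintype.card U * lpCost 𝒞 c π y := by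
  choose f hf𝒞 hfu hle using fun u => exists_mem_cost_singleton_le hπ hc hy (hfeas u)
  refine ⟨f, fun u => ⟨hf𝒞 u, hfu u⟩, ?_⟩
  calc ∑ u, c (f u) * gpi π {u}
      ≤ ∑ u : U, ∑ S ∈ 𝒞, ∑ B ∈ S.powerset with u ∈ B, y S B * (c S * gpi π B) :=
        sum_le_sum fun u _ => hle u
    _ ≤ ∑ _u : U, ∑ S ∈ 𝒞, ∑ B ∈ S.powerset, y S B * (c S * gpi π B) :=
        sum_le_sum fun _ _ => sum_le_sum fun S hS =>
          sum_le_sum_of_subset_of_nonneg (filter_subset _ _) fun B _ _ =>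
            mul_nonneg (hy S B) (mul_nonneg (hc S hS) (gpi_nonneg hπ B))
    _ = Fintype.card U * lpCost 𝒞 c π y := by
        simp only [sum_const, card_univ, nsmul_eq_mul, lpCost, mul_sum]
        exact sum_congr rfl fun S _ => sum_congr rfl fun B _ => by ring

end Fallback

section Sampling

variable {U : Type*} [DecidableEq U] {𝒞 : Finset (Finset U)}
  {c π : Finset U → ℝ} {y : Finset U → Finset U → ℝ}

/-- The LP leaves `y S B` for `B ⊄ S` unconstrained; sampling uses `y^S` with that mass removed. -/
def configDist (y : Finset U → Finset U → ℝ) (S B : Finset U) : ℝ :=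
  if B ⊆ S then y S B else 0

theorem configDist_nonneg (hy : ∀ S B, 0 ≤ y S B) (S B : Finset U) : 0 ≤ configDist y S B := by
  unfold configDist; split_ifs <;> simp [hy]

variable [Fintype U]

theorem sum_configDist_mul (S : Finset U) (h : Finset U → ℝ) :
    ∑ B, configDist y S B * h B = ∑ B ∈ S.powerset, y S B * h B := by
  have hP : univ.filter (· ⊆ S) = S.powerset := by ext; simp
  simp [configDist, ite_mul, ← sum_filter, hP]

theorem sum_configDist {S : Finset U} (hS : ∑ B ∈ S.powerset, y S B = 1) :
    ∑ B, configDist y S B = 1 := by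
  simpa [hS] using sum_configDist_mul (y := y) S 1

theorem sum_filter_configDist (S : Finset U) (P : Finset U → Prop) [DecidablePred P] :
    ∑ B with P B, configDist y S B = ∑ B ∈ S.powerset with P B, y S B := by
  simpa [← sum_filter] using sum_configDist_mul (y := y) S fun B => if P B then 1 else 0

theorem sum_prodWeight_mul_sampleCost (hprob : ∀ S ∈ 𝒞, ∑ B ∈ S.powerset, y S B = 1) (T : ℕ) :
    ∑ ω : 𝒞 × Fin T → Finset U, prodWeight (fun i => configDist y i.1) ω *
      ∑ i, c i.1 * gpi π (ω i ∩ i.1) = T * lpCost 𝒞 c π y := by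
  have hround : ∀ i : 𝒞 × Fin T, ∑ ω : 𝒞 × Fin T → Finset U,
      prodWeight (fun i => configDist y i.1) ω * (c i.1 * gpi π (ω i ∩ i.1)) =
        c i.1 * ∑ B ∈ (i.1 : Finset U).powerset, y i.1 B * gpi π B := by
    intro i
    rw [sum_prodWeight_mul_apply (fun j => sum_configDist (hprob _ j.1.2)) i
      fun B => c i.1 * gpi π (B ∩ i.1), sum_configDist_mul, mul_sum]
    refine sum_congr rfl fun B hB => ?_
    rw [inter_eq_left.2 (mem_powerset.1 hB)]
    ring
  simp_rw [mul_sum]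
  rw [sum_comm, sum_congr rfl fun i _ => hround i]
  exact sum_subtype_prod_fin 𝒞 T fun S => c S * ∑ B ∈ S.powerset, y S B * gpi π B

theorem sum_prodWeight_mul_uncovered_le (hy : ∀ S B, 0 ≤ y S B)
    (hprob : ∀ S ∈ 𝒞, ∑ B ∈ S.powerset, y S B = 1) {u : U}
    (hfeas : 1 ≤ ∑ S ∈ 𝒞, ∑ B ∈ S.powerset.filter (fun B : Finset U => u ∈ B), y S B) (T : ℕ) :
    ∑ ω : 𝒞 × Fin T → Finset U, prodWeight (fun i => configDist y i.1) ω *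
      (if ∀ i, u ∉ ω i ∩ i.1 then 1 else 0) ≤ Real.exp (-T) := by
  have hbound := sum_prodWeight_mul_ite_forall_notMem_le
    (fun (i : 𝒞 × Fin T) => configDist_nonneg hy i.1) (fun i => sum_configDist (hprob _ i.1.2))
    fun i => univ.filter fun B => u ∈ B ∩ i.1
  have hhit : ∀ S : Finset U,
      ∑ B with u ∈ B ∩ S, configDist y S B = ∑ B ∈ S.powerset with u ∈ B, y S B := by
    intro S
    rw [sum_filter_configDist]
    refine sum_congr (filter_congr fun B hB => ?_) fun _ _ => rfl
    simpa [mem_inter] using fun h => mem_powerset.1 hB h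
  simp only [mem_filter, mem_univ, true_and, hhit] at hbound
  refine hbound.trans (Real.exp_le_exp.2 (neg_le_neg ?_))
  rw [sum_subtype_prod_fin 𝒞 T fun S => ∑ B ∈ S.powerset with u ∈ B, y S B]
  exact le_mul_of_one_le_right (Nat.cast_nonneg T) hfeas

theorem exists_sample_mapCost_le (hπ : ∀ X, 0 ≤ π X) (hc : ∀ S ∈ 𝒞, 0 ≤ c S)
    (hy : ∀ S B, 0 ≤ y S B)
    (hfeas : ∀ u : U,
      1 ≤ ∑ S ∈ 𝒞, ∑ B ∈ S.powerset.filter (fun B : Finset U => u ∈ B), y S B)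
    (hprob : ∀ S ∈ 𝒞, ∑ B ∈ S.powerset, y S B = 1) (T : ℕ) {f : U → Finset U}
    (hf : ∀ u, f u ∈ 𝒞) :
    ∃ ω : 𝒞 × Fin T → Finset U,
      mapCost 𝒞 c π (coverMap (fun i => i.1) (fun i => ω i ∩ i.1) f) ≤
        T * lpCost 𝒞 c π y + Real.exp (-T) * ∑ u, c (f u) * gpi π {u} := by
  set w := prodWeight fun i : 𝒞 × Fin T => configDist y i.1
  set V : (𝒞 × Fin T → Finset U) → ℝ := fun ω => ∑ i, c i.1 * gpi π (ω i ∩ i.1) +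
    ∑ u, c (f u) * gpi π {u} * (if ∀ i, u ∉ ω i ∩ i.1 then 1 else 0)
  have hfallback0 : ∀ u, 0 ≤ c (f u) * gpi π {u} := fun u =>
    mul_nonneg (hc _ (hf u)) (gpi_nonneg hπ _)
  have hV0 : ∀ ω, 0 ≤ V ω := fun ω =>
    add_nonneg (sum_nonneg fun i _ => mul_nonneg (hc _ i.1.2) (gpi_nonneg hπ _))
      (sum_nonneg fun u _ => mul_nonneg (hfallback0 u) (by split_ifs <;> norm_num))
  have hEV : ∑ ω, w ω * V ω ≤
      T * lpCost 𝒞 c π y + Real.exp (-T) * ∑ u, c (f u) * gpi π {u} := by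
    simp only [V, mul_add, sum_add_distrib, w, sum_prodWeight_mul_sampleCost hprob T]
    gcongr
    calc _ = ∑ u, c (f u) * gpi π {u} * ∑ ω, w ω * (if ∀ i, u ∉ ω i ∩ i.1 then 1 else 0) := by
          simp only [mul_sum]
          rw [sum_comm]
          exact sum_congr rfl fun u _ => sum_congr rfl fun ω _ => by ring
      _ ≤ ∑ u, c (f u) * gpi π {u} * Real.exp (-T) := by
          gcongr with u
          · exact hfallback0 u
          · exact sum_prodWeight_mul_uncovered_le hy hprob (hfeas u) T
      _ = _ := by rw [mul_sum]; exact sum_congr rfl fun u _ => mul_comm _ _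
  obtain ⟨ω, -, hω⟩ := exists_le_sum_mul_of_one_le_sum (s := univ) (w := w) (v := V)
    (fun ω _ => prodWeight_nonneg (fun i => configDist_nonneg hy i.1) ω)
    (sum_prodWeight fun i => sum_configDist (hprob _ i.1.2)).ge fun ω _ => hV0 ω
  refine ⟨ω, ((mapCost_coverMap_le hπ hc (fun i => i.1.2) hf).trans_eq ?_).trans (hω.trans hEV)⟩
  simp [V, sum_filter]

end Sampling

theorem natCeil_log_mul_add_exp_neg_mul_le {n L M : ℝ} (hn : 2 ≤ n) (hL : 0 ≤ L)
    (hM : M ≤ n * L) :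
    ⌈Real.log n⌉₊ * L + Real.exp (-⌈Real.log n⌉₊) * M ≤ 4 * Real.log n * L := by
  have hlog : 2 / 3 ≤ Real.log n := by
    have := Real.log_le_log (by norm_num) hn
    linarith [Real.log_two_gt_d9]
  have hT : (⌈Real.log n⌉₊ : ℝ) ≤ Real.log n + 1 := (Nat.ceil_lt_add_one (by linarith)).le
  have hexp : Real.exp (-⌈Real.log n⌉₊) * M ≤ L :=
    calc Real.exp (-⌈Real.log n⌉₊) * M ≤ Real.exp (-⌈Real.log n⌉₊) * (n * L) := by gcongr
      _ ≤ Real.exp (-Real.log n) * (n * L) := by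
          have := Nat.le_ceil (Real.log n)
          gcongr
      _ = L := by
          rw [Real.exp_neg, Real.exp_log (by linarith)]
          field_simp
  nlinarith

theorem stmt5_general {U : Type*} [Fintype U] [DecidableEq U]
    (hn : 3 ≤ Fintype.card U)
    (𝒞 : Finset (Finset U)) (c : Finset U → ℝ) (hc : ∀ S ∈ 𝒞, 0 ≤ c S)
    (π : Finset U → ℝ) (hπ : ∀ X, 0 ≤ π X)
    (y : Finset U → Finset U → ℝ) (hy : ∀ S B : Finset U, 0 ≤ y S B)
    (hfeas : ∀ u : U,
      1 ≤ ∑ S ∈ 𝒞, ∑ B ∈ S.powerset.filter (fun B : Finset U => u ∈ B), y S B)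
    (hprob : ∀ S ∈ 𝒞, ∑ B ∈ S.powerset, y S B = 1) :
    ∃ φ : U → Finset U, (∀ u : U, φ u ∈ 𝒞 ∧ u ∈ φ u) ∧
      ∑ S ∈ 𝒞, c S * gpi π (Finset.univ.filter (fun u : U => φ u = S)) ≤
        4 * Real.log (Fintype.card U) *
          ∑ S ∈ 𝒞, c S * ∑ B ∈ S.powerset, y S B * gpi π B := by
  obtain ⟨f, hf, hfallback⟩ := exists_fallback hπ hc hy hfeas
  obtain ⟨ω, hω⟩ := exists_sample_mapCost_le hπ hc hy hfeas hprob
    ⌈Real.log (Fintype.card U)⌉₊ fun u => (hf u).1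
  refine ⟨_, coverMap_mem (fun _ => inter_subset_right) (fun i => i.1.2) hf, hω.trans ?_⟩
  exact natCeil_log_mul_add_exp_neg_mul_le (by exact_mod_cast hn.trans' (by norm_num))
    (lpCost_nonneg hπ hc hy) hfallback

/-- A feasible fractional solution to the configuration LP for universal stochastic set
cover, normalized so that for each `S ∈ 𝒞` the values `(y^S_B)_{B⊆S}` form a probability
distribution, can be rounded to a mapping `φ` of expected cost at most `4·ln n` times the
fractional cost (where `n = |U| ≥ 3`). -/
theorem stmt5 {U : Type*} [Fintype U] [DecidableEq U]
    (hn : 3 ≤ Fintype.card U)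
    (𝒞 : Finset (Finset U)) (c : Finset U → ℝ) (hc : ∀ S ∈ 𝒞, 0 ≤ c S)
    (π : Finset U → ℝ) (hπ : ∀ X, 0 ≤ π X) (hsum : ∑ X : Finset U, π X = 1)
    (y : Finset U → Finset U → ℝ) (hy : ∀ S B : Finset U, 0 ≤ y S B)
    (hfeas : ∀ u : U,
      1 ≤ ∑ S ∈ 𝒞, ∑ B ∈ S.powerset.filter (fun B : Finset U => u ∈ B), y S B)
    (hprob : ∀ S ∈ 𝒞, ∑ B ∈ S.powerset, y S B = 1) :
    ∃ φ : U → Finset U, (∀ u : U, φ u ∈ 𝒞 ∧ u ∈ φ u) ∧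
      ∑ S ∈ 𝒞, c S * gpi π (Finset.univ.filter (fun u : U => φ u = S)) ≤
        4 * Real.log (Fintype.card U) *
          ∑ S ∈ 𝒞, c S * ∑ B ∈ S.powerset, y S B * gpi π B :=
  stmt5_general hn 𝒞 c hc π hπ y hy hfeas hprob
end

section
/- Let π be a probability distribution on the subsets of a finite universe U, let S ⊆ U, let f ≥ 1 be a real number, let B₀ ⊆ S, and let y : 2^S → ℝ≥0 be nonnegative weights such that for every u ∈ B₀ one has ∑_{B⊆S, u∈B} y(B) ≥ 1/f. Then g_π(B₀) ≤ f · ∑_{B⊆S} y(B)·g_π(B). -/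
open Finset

/-- If every element of `B₀ ⊆ S` receives fractional mass at least `1/f` from
configurations inside `S`, then `g_π(B₀) ≤ f · ∑_{B⊆S} y(B)·g_π(B)`. -/
theorem stmt6 {U : Type*} [Fintype U] [DecidableEq U]
    (π : Finset U → ℝ) (hπ : ∀ X, 0 ≤ π X) (hsum : ∑ X : Finset U, π X = 1)
    (S B₀ : Finset U) (hB₀ : B₀ ⊆ S) (f : ℝ) (hf : 1 ≤ f)
    (y : Finset U → ℝ) (hy : ∀ B, 0 ≤ y B)
    (hcov : ∀ u ∈ B₀, 1 / f ≤ ∑ B ∈ S.powerset.filter (fun B : Finset U => u ∈ B), y B) :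
    gpi π B₀ ≤ f * ∑ B ∈ S.powerset, y B * gpi π B := by
  classical
  have hf0 : (0:ℝ) < f := lt_of_lt_of_le one_pos hf
  have gpi_eq : ∀ B : Finset U,
      gpi π B = ∑ X : Finset U, (if (X ∩ B).Nonempty then π X else 0) := by
    intro B
    rw [gpi, Finset.sum_filter]
  have key : ∀ X : Finset U,
      (if (X ∩ B₀).Nonempty then π X else 0) ≤
      f * ∑ B ∈ S.powerset, y B * (if (X ∩ B).Nonempty then π X else 0) := by
    intro X
    have hnn : ∀ B ∈ S.powerset,
        0 ≤ y B * (if (X ∩ B).Nonempty then π X else 0) := by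
      intro B _
      apply mul_nonneg (hy B)
      split
      · exact hπ X
      · exact le_refl 0
    by_cases h : (X ∩ B₀).Nonempty
    · rw [if_pos h]
      obtain ⟨u, hu⟩ := h
      rw [Finset.mem_inter] at hu
      have h1 : (1 / f) * π X ≤
          ∑ B ∈ S.powerset.filter (fun B : Finset U => u ∈ B),
            y B * (if (X ∩ B).Nonempty then π X else 0) := by
        calc (1 / f) * π X
            ≤ (∑ B ∈ S.powerset.filter (fun B : Finset U => u ∈ B), y B) * π X :=
              mul_le_mul_of_nonneg_right (hcov u hu.2) (hπ X)
          _ = ∑ B ∈ S.powerset.filter (fun B : Finset U => u ∈ B), y B * π X := by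
              rw [Finset.sum_mul]
          _ = _ := by
              refine Finset.sum_congr rfl fun B hB => ?_
              have huB : u ∈ B := (Finset.mem_filter.mp hB).2
              rw [if_pos ⟨u, Finset.mem_inter.mpr ⟨hu.1, huB⟩⟩]
      have h2 : ∑ B ∈ S.powerset.filter (fun B : Finset U => u ∈ B),
            y B * (if (X ∩ B).Nonempty then π X else 0) ≤
          ∑ B ∈ S.powerset, y B * (if (X ∩ B).Nonempty then π X else 0) :=
        Finset.sum_le_sum_of_subset_of_nonneg (Finset.filter_subset _ _)
          (fun B hB _ => hnn B hB)
      have := le_trans h1 h2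
      calc π X = f * ((1 / f) * π X) := by field_simp
        _ ≤ f * _ := mul_le_mul_of_nonneg_left this (le_of_lt hf0)
    · rw [if_neg h]
      exact mul_nonneg (le_of_lt hf0) (Finset.sum_nonneg hnn)
  calc gpi π B₀ = ∑ X : Finset U, (if (X ∩ B₀).Nonempty then π X else 0) := gpi_eq B₀
    _ ≤ ∑ X : Finset U,
          f * ∑ B ∈ S.powerset, y B * (if (X ∩ B).Nonempty then π X else 0) :=
        Finset.sum_le_sum fun X _ => key X
    _ = f * ∑ X : Finset U,
          ∑ B ∈ S.powerset, y B * (if (X ∩ B).Nonempty then π X else 0) := by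
        rw [Finset.mul_sum]
    _ = f * ∑ B ∈ S.powerset, y B * gpi π B := by
        rw [Finset.sum_comm]
        congr 1
        refine Finset.sum_congr rfl fun B _ => ?_
        rw [gpi_eq B, Finset.mul_sum]
end

section
/- Suppose every element of the finite universe U belongs to at most f sets of the collection 𝒞 (frequency at most f). Then any feasible fractional solution (y^S_B)_{S∈𝒞, B⊆S} with y^S_B ≥ 0 and ∑_{S∈𝒞}∑_{B⊆S, u∈B} y^S_B ≥ 1 for every u ∈ U can be rounded to an integral solution losing at most a factor f: there exists a mapping φ : U → 𝒞 with u ∈ φ(u) for all u such that ∑_{S∈𝒞} c(S)·g_π(φ⁻¹(S)) ≤ f · ∑_{S∈𝒞} c(S) ∑_{B⊆S} y^S_B · g_π(B). -/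
open Finset

/-- If every element of the finite universe `U` belongs to at most `f` sets of the
collection `𝒞`, then any feasible fractional solution to the configuration LP for
universal stochastic set cover can be rounded to an integral mapping `φ` losing at most
a factor `f`. -/
theorem stmt7 {U : Type*} [Fintype U] [DecidableEq U]
    (π : Finset U → ℝ) (hπ : ∀ X, 0 ≤ π X) (hsum : ∑ X : Finset U, π X = 1)
    (𝒞 : Finset (Finset U)) (c : Finset U → ℝ) (hc : ∀ S ∈ 𝒞, 0 ≤ c S)
    (f : ℕ) (hfreq : ∀ u : U, (𝒞.filter (fun S : Finset U => u ∈ S)).card ≤ f)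
    (y : Finset U → Finset U → ℝ) (hy : ∀ S B : Finset U, 0 ≤ y S B)
    (hfeas : ∀ u : U,
      1 ≤ ∑ S ∈ 𝒞, ∑ B ∈ S.powerset.filter (fun B : Finset U => u ∈ B), y S B) :
    ∃ φ : U → Finset U, (∀ u : U, φ u ∈ 𝒞 ∧ u ∈ φ u) ∧
      ∑ S ∈ 𝒞, c S * gpi π (Finset.univ.filter (fun u : U => φ u = S)) ≤
        (f : ℝ) * ∑ S ∈ 𝒞, c S * ∑ B ∈ S.powerset, y S B * gpi π B := by
  classical
  have claim : ∀ u : U, ∃ S, S ∈ 𝒞 ∧ u ∈ S ∧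
      1 ≤ (f : ℝ) * ∑ B ∈ S.powerset.filter (fun B : Finset U => u ∈ B), y S B := by
    intro u
    set g : Finset U → ℝ :=
      fun S => ∑ B ∈ S.powerset.filter (fun B : Finset U => u ∈ B), y S B with hg
    have hgnn : ∀ S, 0 ≤ g S := fun S => Finset.sum_nonneg fun B _ => hy S B
    set T := 𝒞.filter (fun S : Finset U => u ∈ S) with hTdef
    have hsumT : (1 : ℝ) ≤ ∑ S ∈ T, g S := by
      refine le_trans (hfeas u) (le_of_eq ?_)
      rw [hTdef, Finset.sum_filter]
      refine Finset.sum_congr rfl fun S _ => ?_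
      split
      · rfl
      · rename_i h
        refine Finset.sum_eq_zero fun B hB => ?_
        simp only [Finset.mem_filter, Finset.mem_powerset] at hB
        exact absurd (hB.1 hB.2) h
    have hTne : T.Nonempty := by
      by_contra h
      rw [Finset.not_nonempty_iff_eq_empty] at h
      rw [h, Finset.sum_empty] at hsumT
      linarith
    have hcard : (0 : ℝ) < (T.card : ℝ) := by
      exact_mod_cast Nat.pos_of_ne_zero (fun h => by simp [Finset.card_eq_zero.mp h] at hTne)
    have : ∑ S ∈ T, ((T.card : ℝ))⁻¹ ≤ ∑ S ∈ T, g S := by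
      rw [Finset.sum_const, nsmul_eq_mul, mul_inv_cancel₀ (ne_of_gt hcard)]
      exact hsumT
    obtain ⟨S, hST, hSg⟩ := Finset.exists_le_of_sum_le hTne this
    simp only [hTdef, Finset.mem_filter] at hST
    refine ⟨S, hST.1, hST.2, ?_⟩
    have h1 : 1 ≤ (T.card : ℝ) * g S := by
      rw [← mul_inv_cancel₀ (ne_of_gt hcard)]
      exact mul_le_mul_of_nonneg_left hSg (le_of_lt hcard)
    refine le_trans h1 (mul_le_mul_of_nonneg_right ?_ (hgnn S))
    exact_mod_cast hfreq u
  choose φ h1 h2 h3 using claim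
  refine ⟨φ, fun u => ⟨h1 u, h2 u⟩, ?_⟩
  rw [Finset.mul_sum]
  refine Finset.sum_le_sum fun S hS => ?_
  rw [← mul_assoc, mul_comm (f : ℝ) (c S), mul_assoc]
  refine mul_le_mul_of_nonneg_left ?_ (hc S hS)
  set A := Finset.univ.filter (fun u : U => φ u = S) with hA
  have key : ∀ X ∈ Finset.univ.filter (fun X : Finset U => (X ∩ A).Nonempty),
      π X ≤ (f : ℝ) * ∑ B ∈ S.powerset.filter (fun B : Finset U => (X ∩ B).Nonempty),
        y S B * π X := by
    intro X hX
    simp only [Finset.mem_filter, Finset.mem_univ, true_and] at hX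
    obtain ⟨u, hu⟩ := hX
    rw [Finset.mem_inter] at hu
    have huX : u ∈ X := hu.1
    have huS : φ u = S := by
      have := hu.2
      rw [hA, Finset.mem_filter] at this
      exact this.2
    have h3u := h3 u
    rw [huS] at h3u
    calc π X = 1 * π X := (one_mul _).symm
      _ ≤ ((f : ℝ) * ∑ B ∈ S.powerset.filter (fun B : Finset U => u ∈ B), y S B) * π X :=
          mul_le_mul_of_nonneg_right h3u (hπ X)
      _ = (f : ℝ) * ∑ B ∈ S.powerset.filter (fun B : Finset U => u ∈ B), y S B * π X := by
          rw [mul_assoc, Finset.sum_mul]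
      _ ≤ (f : ℝ) * ∑ B ∈ S.powerset.filter (fun B : Finset U => (X ∩ B).Nonempty),
            y S B * π X := by
          refine mul_le_mul_of_nonneg_left ?_ (Nat.cast_nonneg f)
          refine Finset.sum_le_sum_of_subset_of_nonneg ?_
            (fun B _ _ => mul_nonneg (hy S B) (hπ X))
          intro B hB
          simp only [Finset.mem_filter] at hB ⊢
          exact ⟨hB.1, ⟨u, Finset.mem_inter.mpr ⟨huX, hB.2⟩⟩⟩
  calc gpi π A ≤ ∑ X ∈ Finset.univ.filter (fun X : Finset U => (X ∩ A).Nonempty),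
        (f : ℝ) * ∑ B ∈ S.powerset.filter (fun B : Finset U => (X ∩ B).Nonempty),
          y S B * π X := Finset.sum_le_sum key
    _ ≤ ∑ X : Finset U, (f : ℝ) * ∑ B ∈ S.powerset.filter
          (fun B : Finset U => (X ∩ B).Nonempty), y S B * π X := by
        refine Finset.sum_le_sum_of_subset_of_nonneg (Finset.filter_subset _ _)
          fun X _ _ => mul_nonneg (Nat.cast_nonneg f)
            (Finset.sum_nonneg fun B _ => mul_nonneg (hy S B) (hπ X))
    _ = (f : ℝ) * ∑ B ∈ S.powerset, y S B * gpi π B := by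
        rw [← Finset.mul_sum]
        congr 1
        have : ∀ X : Finset U,
            ∑ B ∈ S.powerset.filter (fun B : Finset U => (X ∩ B).Nonempty), y S B * π X
            = ∑ B ∈ S.powerset,
                if (X ∩ B).Nonempty then y S B * π X else 0 :=
          fun X => Finset.sum_filter _ _
        simp_rw [this]
        rw [Finset.sum_comm]
        refine Finset.sum_congr rfl fun B _ => ?_
        rw [gpi, Finset.mul_sum, ← Finset.sum_filter]
end

section
/- Let U be a finite universe with |U| = n, let 𝒞 be a finite collection of subsets of U with costs c(S) ≥ 0, let r : U → ℤ≥1 be coverage requirements, and let π be a probability distribution on the subsets of U. Suppose nonnegative reals (y^S_B)_{S∈𝒞, B⊆S} satisfy: (i) for every u ∈ U, ∑_{S∈𝒞} ∑_{B⊆S, u∈B} y^S_B ≥ r(u), and (ii) for every S ∈ 𝒞, ∑_{B⊆S} y^S_B ≤ 1. Then there exists a mapping φ assigning to each u ∈ U a family φ(u) of exactly r(u) distinct sets of 𝒞, each containing u, such that ∑_{S∈𝒞} c(S)·g_π({u ∈ U : S ∈ φ(u)}) ≤ H_n · ∑_{S∈𝒞} c(S) ∑_{B⊆S} y^S_B ·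 g_π(B), where H_n = ∑_{i=1}^n 1/i. -/
/-!
Run the greedy algorithm: from the empty assignment, repeatedly choose `S ∈ 𝒞` and a nonempty
`B ⊆ S` of elements that still need sets and do not have `S` yet, minimising the price
`c(S) g_π(B) / |B|`, and assign `S` to all of `B`. The potential
`∑_S ∑_{B ⊆ S} c(S) y^S_B g_π(B) H_{k(S,B)}`, with `k(S,B)` the number of elements of `B` that can
still receive `S`, is initially at most `H_n` times the LP cost. Minimality of the price and
`H_k - H_{k'} ≥ (k - k') / k` show that a step drops the potential by at least the price times the
LP mass `x_S(u) = ∑_{u ∈ B ⊆ S} y^S_B` of the sets becoming unavailable to each `u ∈ B`. The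
missing part `(1 - x_S(u))` of the price is deferred as a charge on `u`; when `u` is fully covered,
LP feasibility gives its remaining sets mass at least `1 + ∑ (1 - x_S(u))` over the sets assigned
so far, and since prices never decrease this repays the deferred charges.
-/

open Finset

lemma harmonic_mono {a b : ℕ} (h : a ≤ b) : harmonic a ≤ harmonic b :=
  sum_le_sum_of_subset_of_nonneg (range_subset_range.2 h) fun _ _ _ => by positivity

lemma sub_div_le_harmonic_sub {a b : ℕ} (h : a ≤ b) :
    ((b : ℚ) - a) / b ≤ harmonic b - harmonic a := by
  rw [harmonic, harmonic, ← sum_Ico_eq_sub _ h]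
  calc ((b : ℚ) - a) / b = #(Ico a b) • ((b : ℚ)⁻¹) := by
        rw [Nat.card_Ico, nsmul_eq_mul, Nat.cast_sub h, div_eq_mul_inv]
    _ ≤ ∑ i ∈ Ico a b, ((i + 1 : ℕ) : ℚ)⁻¹ := by
        refine card_nsmul_le_sum _ _ _ fun i hi => ?_
        have hib : i + 1 ≤ b := (mem_Ico.1 hi).2
        gcongr

lemma mul_sub_le_mul_harmonic_sub {k k' : ℕ} {ρ a : ℝ} (hk : k' ≤ k) (ha : 0 ≤ a)
    (hρ : ρ * k ≤ a) : ρ * ((k : ℝ) - k') ≤ a * ((harmonic k : ℝ) - harmonic k') := by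
  rcases Nat.eq_zero_or_pos k with rfl | hpos
  · simp [Nat.le_zero.1 hk]
  have hk0 : (0 : ℝ) < k := by exact_mod_cast hpos
  have hH : ((k : ℝ) - k') / k ≤ (harmonic k : ℝ) - harmonic k' := by
    simpa using (Rat.cast_le (K := ℝ)).2 (sub_div_le_harmonic_sub hk)
  have hsub : (0 : ℝ) ≤ (k : ℝ) - k' := sub_nonneg.2 (by exact_mod_cast hk)
  calc ρ * ((k : ℝ) - k') = ρ * k * (((k : ℝ) - k') / k) := by field_simp
    _ ≤ a * (((k : ℝ) - k') / k) := by gcongr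
    _ ≤ a * ((harmonic k : ℝ) - harmonic k') := by gcongr

namespace UniversalMulticover

variable {U : Type*} [DecidableEq U]

section Assignment

variable (r : U → ℕ) (y : Finset U → Finset U → ℝ)

def lpMass (S : Finset U) (u : U) : ℝ :=
  ∑ B ∈ S.powerset.filter (fun B : Finset U => u ∈ B), y S B

def deficit (φ : U → Finset (Finset U)) (u : U) : ℝ :=
  ∑ S ∈ φ u, (1 - lpMass y S u)

def Available (φ : U → Finset (Finset U)) (S : Finset U) (u : U) : Prop :=
  (φ u).card < r u ∧ S ∉ φ u

instance (φ : U → Finset (Finset U)) (S : Finset U) : DecidablePred (Available r φ S) :=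
  fun _ => instDecidableAnd

def numAvailable (φ : U → Finset (Finset U)) (S B : Finset U) : ℕ :=
  (B.filter (Available r φ S)).card

def assign (φ : U → Finset (Finset U)) (S B : Finset U) (u : U) : Finset (Finset U) :=
  if u ∈ B then insert S (φ u) else φ u

/-- An element of `B` that still needs more sets defers the part `(1 - lpMass y S u) * ρ` of
its price `ρ` that the potential does not pay for; one that becomes fully covered settles its
account. -/
noncomputable def recharge (φ : U → Finset (Finset U)) (e : U → ℝ) (S B : Finset U) (ρ : ℝ)
    (u : U) : ℝ :=
  if u ∈ B then (if (φ u).card + 1 = r u then 0 else e u + (1 - lpMass y S u) * ρ) else e u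

variable {r y} {𝒞 : Finset (Finset U)}

lemma lpMass_nonneg (hy : ∀ S B, 0 ≤ y S B) (S : Finset U) (u : U) : 0 ≤ lpMass y S u :=
  sum_nonneg fun B _ => hy S B

lemma lpMass_le_one (hy : ∀ S B, 0 ≤ y S B) (hcap : ∀ S ∈ 𝒞, ∑ B ∈ S.powerset, y S B ≤ 1)
    {S : Finset U} (hS : S ∈ 𝒞) (u : U) : lpMass y S u ≤ 1 :=
  (sum_le_sum_of_subset_of_nonneg (filter_subset _ _) fun B _ _ => hy S B).trans (hcap S hS)

lemma lpMass_eq_zero_of_notMem {S : Finset U} {u : U} (h : u ∉ S) : lpMass y S u = 0 :=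
  sum_eq_zero fun _ hB => absurd ((mem_powerset.1 (mem_filter.1 hB).1) (mem_filter.1 hB).2) h

lemma deficit_nonneg (hy : ∀ S B, 0 ≤ y S B) (hcap : ∀ S ∈ 𝒞, ∑ B ∈ S.powerset, y S B ≤ 1)
    {φ : U → Finset (Finset U)} {u : U} (hφ : φ u ⊆ 𝒞) : 0 ≤ deficit y φ u :=
  sum_nonneg fun _ hS => sub_nonneg.2 (lpMass_le_one hy hcap (hφ hS) u)

lemma sub_card_add_deficit_le (hfeas : ∀ u, (r u : ℝ) ≤ ∑ S ∈ 𝒞, lpMass y S u)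
    {φ : U → Finset (Finset U)} {u : U} (hφ : φ u ⊆ 𝒞) :
    (r u : ℝ) - (φ u).card + deficit y φ u ≤ ∑ S ∈ 𝒞.filter (· ∉ φ u), lpMass y S u := by
  have hsplit := sum_filter_add_sum_filter_not 𝒞 (· ∈ φ u) (lpMass y · u)
  rw [filter_mem_eq_inter, inter_eq_right.2 hφ] at hsplit
  have hdef : deficit y φ u = (φ u).card - ∑ S ∈ φ u, lpMass y S u := by
    simp [deficit, sum_sub_distrib]
  linarith [hfeas u]

variable {φ φ' : U → Finset (Finset U)} {S B : Finset U} {u : U}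

lemma subset_assign (φ : U → Finset (Finset U)) (S B : Finset U) (u : U) :
    φ u ⊆ assign φ S B u := by
  unfold assign
  split_ifs
  exacts [subset_insert _ _, Subset.rfl]

lemma assign_of_mem (h : u ∈ B) : assign φ S B u = insert S (φ u) := if_pos h

lemma assign_of_notMem (h : u ∉ B) : assign φ S B u = φ u := if_neg h

lemma card_assign_of_mem (hu : u ∈ B) (hS : S ∉ φ u) :
    (assign φ S B u).card = (φ u).card + 1 := by
  rw [assign_of_mem hu, card_insert_of_notMem hS]

lemma deficit_assign_of_mem (hu : u ∈ B) (hS : S ∉ φ u) :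
    deficit y (assign φ S B) u = deficit y φ u + (1 - lpMass y S u) := by
  rw [deficit, assign_of_mem hu, sum_insert hS, deficit, add_comm]

omit [DecidableEq U] in
lemma Available.of_subset (hφ : ∀ u, φ u ⊆ φ' u) (h : Available r φ' S u) :
    Available r φ S u :=
  ⟨(card_le_card (hφ u)).trans_lt h.1, fun hS => h.2 (hφ u hS)⟩

lemma numAvailable_le_of_subset (hφ : ∀ u, φ u ⊆ φ' u) (S B : Finset U) :
    numAvailable r φ' S B ≤ numAvailable r φ S B :=
  card_le_card (monotone_filter_right _ fun _ _ => Available.of_subset hφ)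

lemma numAvailable_sub_eq_card (hφ : ∀ u, φ u ⊆ φ' u) (S B : Finset U) :
    (numAvailable r φ S B : ℝ) - numAvailable r φ' S B =
      (B.filter fun u => Available r φ S u ∧ ¬Available r φ' S u).card := by
  have hsplit :=
    card_filter_add_card_filter_not (s := B.filter (Available r φ S)) (Available r φ' S)
  simp only [filter_filter] at hsplit
  rw [filter_congr fun u _ => and_iff_right_of_imp (Available.of_subset hφ)] at hsplit
  rw [numAvailable, numAvailable, ← hsplit]
  push_cast
  ring

end Assignment

variable [Fintype U]

section Probability

variable {π : Finset U → ℝ}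

lemma gpi_nonneg (hπ : ∀ X, 0 ≤ π X) (B : Finset U) : 0 ≤ gpi π B :=
  sum_nonneg fun X _ => hπ X

lemma gpi_mono (hπ : ∀ X, 0 ≤ π X) {A B : Finset U} (h : A ⊆ B) : gpi π A ≤ gpi π B :=
  sum_le_sum_of_subset_of_nonneg
    (monotone_filter_right _ fun _ _ => Nonempty.mono (inter_subset_inter_left h))
    fun X _ _ => hπ X

@[simp]
lemma gpi_empty : gpi π (∅ : Finset U) = 0 := by
  simp [gpi]

lemma gpi_union_le (hπ : ∀ X, 0 ≤ π X) (A B : Finset U) :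
    gpi π (A ∪ B) ≤ gpi π A + gpi π B := by
  have hfilter : univ.filter (fun X : Finset U => (X ∩ (A ∪ B)).Nonempty) =
      univ.filter (fun X : Finset U => (X ∩ A).Nonempty) ∪
        univ.filter (fun X : Finset U => (X ∩ B).Nonempty) := by
    rw [← filter_or]
    simp only [inter_union_distrib_left, union_nonempty]
  rw [gpi, hfilter, gpi, gpi, ← sum_union_inter]
  exact le_add_of_nonneg_right (sum_nonneg fun X _ => hπ X)

end Probability

section Greedy

variable (𝒞 : Finset (Finset U)) (c : Finset U → ℝ) (r : U → ℕ) (π : Finset U → ℝ)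
  (y : Finset U → Finset U → ℝ)

noncomputable def potential (φ : U → Finset (Finset U)) : ℝ :=
  ∑ S ∈ 𝒞, ∑ B ∈ S.powerset, c S * y S B * gpi π B * harmonic (numAvailable r φ S B)

def moves (φ : U → Finset (Finset U)) : Finset (Finset U × Finset U) :=
  (𝒞 ×ˢ univ).filter fun m => m.2.Nonempty ∧ m.2 ⊆ m.1 ∧ ∀ u ∈ m.2, Available r φ m.1 u

noncomputable def ratio (m : Finset U × Finset U) : ℝ :=
  c m.1 * gpi π m.2 / m.2.card

noncomputable def cost (φ : U → Finset (Finset U)) : ℝ :=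
  ∑ S ∈ 𝒞, c S * gpi π (univ.filter fun u => S ∈ φ u)

def remaining (φ : U → Finset (Finset U)) : ℕ :=
  ∑ u, (r u - (φ u).card)

def newlyUnavailable (φ φ' : U → Finset (Finset U)) (u : U) : Finset (Finset U) :=
  𝒞.filter fun S => Available r φ S u ∧ ¬Available r φ' S u

structure GreedyInvariant (φ : U → Finset (Finset U)) (e : U → ℝ) : Prop where
  subset : ∀ u, φ u ⊆ 𝒞
  mem : ∀ u, ∀ S ∈ φ u, u ∈ S
  card_le : ∀ u, (φ u).card ≤ r u
  charge_eq_zero : ∀ u, (φ u).card = r u → e u = 0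
  charge_le : ∀ u, (φ u).card < r u → ∀ m ∈ moves 𝒞 r φ, e u ≤ deficit y φ u * ratio c π m

variable {𝒞 c r π y} {φ φ' : U → Finset (Finset U)}

lemma mem_moves {m : Finset U × Finset U} :
    m ∈ moves 𝒞 r φ ↔
      m.1 ∈ 𝒞 ∧ m.2.Nonempty ∧ m.2 ⊆ m.1 ∧ ∀ u ∈ m.2, Available r φ m.1 u := by
  simp [moves]

lemma ratio_nonneg (hc : ∀ S ∈ 𝒞, 0 ≤ c S) (hπ : ∀ X, 0 ≤ π X)
    {m : Finset U × Finset U} (hm : m ∈ moves 𝒞 r φ) : 0 ≤ ratio c π m :=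
  div_nonneg (mul_nonneg (hc _ (mem_moves.1 hm).1) (gpi_nonneg hπ _)) (Nat.cast_nonneg _)

lemma ratio_mul_card {m : Finset U × Finset U} (hm : m.2.Nonempty) :
    ratio c π m * m.2.card = c m.1 * gpi π m.2 :=
  div_mul_cancel₀ _ (Nat.cast_ne_zero.2 hm.card_pos.ne')

lemma moves_subset_of_subset (hφ : ∀ u, φ u ⊆ φ' u) : moves 𝒞 r φ' ⊆ moves 𝒞 r φ :=
  fun _ hm => mem_moves.2 <| (mem_moves.1 hm).imp_right <| .imp_right <| .imp_right
    fun h u hu => (h u hu).of_subset hφ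

lemma moves_nonempty (hfeas : ∀ u, (r u : ℝ) ≤ ∑ S ∈ 𝒞, lpMass y S u)
    (hy : ∀ S B, 0 ≤ y S B) (hcap : ∀ S ∈ 𝒞, ∑ B ∈ S.powerset, y S B ≤ 1)
    (hφ : ∀ u, φ u ⊆ 𝒞) {u : U} (hu : (φ u).card < r u) : (moves 𝒞 r φ).Nonempty := by
  obtain ⟨S, hS, hlp⟩ : ∃ S ∈ 𝒞.filter (· ∉ φ u), lpMass y S u ≠ 0 := by
    by_contra! h
    have hres := sub_card_add_deficit_le hfeas (hφ u)
    rw [sum_eq_zero h] at hres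
    have : ((φ u).card : ℝ) + 1 ≤ r u := by exact_mod_cast hu
    linarith [deficit_nonneg hy hcap (hφ u)]
  have huS : u ∈ S := by_contra fun h => hlp (lpMass_eq_zero_of_notMem h)
  refine ⟨(S, {u}), mem_moves.2 ⟨(mem_filter.1 hS).1, singleton_nonempty u, by simpa, ?_⟩⟩
  simpa [Available] using ⟨hu, (mem_filter.1 hS).2⟩

/-- Double counting the pairs `(B, u)` with `u ∈ B ⊆ S` and `S` newly unavailable for `u`. -/
lemma sum_mul_numAvailable_sub (hφ : ∀ u, φ u ⊆ φ' u) :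
    ∑ S ∈ 𝒞, ∑ B ∈ S.powerset, y S B * ((numAvailable r φ S B : ℝ) - numAvailable r φ' S B) =
      ∑ u, ∑ S ∈ newlyUnavailable 𝒞 r φ φ' u, lpMass y S u := by
  simp_rw [numAvailable_sub_eq_card hφ, newlyUnavailable, lpMass, card_eq_sum_ones, Nat.cast_sum,
    Nat.cast_one, mul_sum, mul_one, sum_filter]
  rw [sum_comm]
  refine sum_congr rfl fun S _ => ?_
  rw [sum_comm' (t' := univ) (s' := fun u => S.powerset.filter (u ∈ ·))
    (fun B u => by simp only [mem_filter, mem_univ, and_true])]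
  refine sum_congr rfl fun u _ => ?_
  split_ifs <;> simp [sum_filter]

lemma mul_numAvailable_le (hc : ∀ S ∈ 𝒞, 0 ≤ c S) (hπ : ∀ X, 0 ≤ π X) {ρ : ℝ}
    (hρ : ∀ m ∈ moves 𝒞 r φ, ρ ≤ ratio c π m) {S B : Finset U} (hS : S ∈ 𝒞) (hB : B ⊆ S) :
    ρ * numAvailable r φ S B ≤ c S * gpi π B := by
  set A := B.filter (Available r φ S)
  have hcB : 0 ≤ c S * gpi π B := mul_nonneg (hc S hS) (gpi_nonneg hπ B)
  rcases A.eq_empty_or_nonempty with hA | hA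
  · simpa [numAvailable, A, hA] using hcB
  have hm : (S, A) ∈ moves 𝒞 r φ :=
    mem_moves.2 ⟨hS, hA, (filter_subset _ _).trans hB, fun u hu => (mem_filter.1 hu).2⟩
  calc ρ * numAvailable r φ S B ≤ ratio c π (S, A) * A.card :=
        mul_le_mul_of_nonneg_right (hρ _ hm) (Nat.cast_nonneg _)
    _ = c S * gpi π A := ratio_mul_card hA
    _ ≤ c S * gpi π B := by
        gcongr
        exacts [hc S hS, gpi_mono hπ (filter_subset _ _)]

lemma mul_sum_lpMass_newlyUnavailable_le (hc : ∀ S ∈ 𝒞, 0 ≤ c S) (hπ : ∀ X, 0 ≤ π X)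
    (hy : ∀ S B, 0 ≤ y S B) {ρ : ℝ} (hρ : ∀ m ∈ moves 𝒞 r φ, ρ ≤ ratio c π m)
    (hφ : ∀ u, φ u ⊆ φ' u) :
    ρ * ∑ u, ∑ S ∈ newlyUnavailable 𝒞 r φ φ' u, lpMass y S u ≤
      potential 𝒞 c r π y φ - potential 𝒞 c r π y φ' := by
  rw [← sum_mul_numAvailable_sub hφ, potential, potential, ← sum_sub_distrib, mul_sum]
  refine sum_le_sum fun S hS => ?_
  rw [← sum_sub_distrib, mul_sum]
  refine sum_le_sum fun B hB => ?_
  have hdrop := mul_sub_le_mul_harmonic_sub (numAvailable_le_of_subset hφ S B)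
    (mul_nonneg (hc S hS) (gpi_nonneg hπ B))
    (mul_numAvailable_le hc hπ hρ hS (mem_powerset.1 hB))
  calc ρ * (y S B * ((numAvailable r φ S B : ℝ) - numAvailable r φ' S B))
      = y S B * (ρ * ((numAvailable r φ S B : ℝ) - numAvailable r φ' S B)) := by ring
    _ ≤ y S B * (c S * gpi π B *
          ((harmonic (numAvailable r φ S B) : ℝ) - harmonic (numAvailable r φ' S B))) := by
        gcongr
        exact hy S B
    _ = _ := by ring

lemma potential_nonneg (hc : ∀ S ∈ 𝒞, 0 ≤ c S) (hπ : ∀ X, 0 ≤ π X) (hy : ∀ S B, 0 ≤ y S B)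
    (φ : U → Finset (Finset U)) : 0 ≤ potential 𝒞 c r π y φ :=
  sum_nonneg fun S hS => sum_nonneg fun B _ =>
    mul_nonneg (mul_nonneg (mul_nonneg (hc S hS) (hy S B)) (gpi_nonneg hπ B))
      (Rat.cast_nonneg.2 (sum_nonneg fun _ _ => by positivity))

lemma potential_le (hc : ∀ S ∈ 𝒞, 0 ≤ c S) (hπ : ∀ X, 0 ≤ π X) (hy : ∀ S B, 0 ≤ y S B)
    (φ : U → Finset (Finset U)) :
    potential 𝒞 c r π y φ ≤
      harmonic (Fintype.card U) * ∑ S ∈ 𝒞, c S * ∑ B ∈ S.powerset, y S B * gpi π B := by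
  rw [mul_sum]
  refine sum_le_sum fun S hS => ?_
  rw [mul_sum, mul_sum]
  refine sum_le_sum fun B _ => ?_
  have hH : harmonic (numAvailable r φ S B) ≤ harmonic (Fintype.card U) :=
    harmonic_mono ((card_filter_le _ _).trans (card_le_univ B))
  have hcyg : 0 ≤ c S * y S B * gpi π B :=
    mul_nonneg (mul_nonneg (hc S hS) (hy S B)) (gpi_nonneg hπ B)
  calc c S * y S B * gpi π B * harmonic (numAvailable r φ S B)
      ≤ c S * y S B * gpi π B * harmonic (Fintype.card U) := by gcongr
    _ = _ := by ring

lemma cost_assign_le (hc : ∀ S ∈ 𝒞, 0 ≤ c S) (hπ : ∀ X, 0 ≤ π X) {S : Finset U} (hS : S ∈ 𝒞)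
    (B : Finset U) : cost 𝒞 c π (assign φ S B) ≤ cost 𝒞 c π φ + c S * gpi π B := by
  have hT : ∀ T ∈ 𝒞, c T * gpi π (univ.filter fun u => T ∈ assign φ S B u) ≤
      c T * gpi π (univ.filter fun u => T ∈ φ u) + if T = S then c S * gpi π B else 0 := by
    intro T hT
    split_ifs with hTS
    · subst hTS
      have hA : univ.filter (fun u => T ∈ assign φ T B u) = univ.filter (T ∈ φ ·) ∪ B := by
        ext u
        by_cases hu : u ∈ B <;> simp [assign_of_mem, assign_of_notMem, hu]
      rw [hA, ← mul_add]
      exact mul_le_mul_of_nonneg_left (gpi_union_le hπ _ _) (hc T hT)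
    · have hA : univ.filter (fun u => T ∈ assign φ S B u) = univ.filter (T ∈ φ ·) := by
        ext u
        by_cases hu : u ∈ B <;> simp [assign_of_mem, assign_of_notMem, hu, hTS]
      rw [hA, add_zero]
  calc cost 𝒞 c π (assign φ S B)
      ≤ ∑ T ∈ 𝒞, (c T * gpi π (univ.filter (T ∈ φ ·)) + if T = S then c S * gpi π B else 0) :=
        sum_le_sum hT
    _ = _ := by rw [sum_add_distrib, sum_ite_eq', if_pos hS, cost]

variable {m : Finset U × Finset U}

lemma remaining_assign_lt (hm : m ∈ moves 𝒞 r φ) :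
    remaining r (assign φ m.1 m.2) < remaining r φ := by
  obtain ⟨-, ⟨u, hu⟩, -, havail⟩ := mem_moves.1 hm
  refine sum_lt_sum (fun v _ => Nat.sub_le_sub_left (card_le_card (subset_assign φ _ _ v)) _)
    ⟨u, mem_univ u, ?_⟩
  rw [card_assign_of_mem hu (havail u hu).2]
  have := (havail u hu).1
  omega

variable {e : U → ℝ}

/-- The sets becoming unavailable to `u` are the chosen set while `u` still needs more sets, and
all its remaining candidates once it is fully covered; the latter carry mass `1 + deficit`. -/
lemma add_sub_recharge_le (hc : ∀ S ∈ 𝒞, 0 ≤ c S) (hπ : ∀ X, 0 ≤ π X) (hy : ∀ S B, 0 ≤ y S B)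
    (hfeas : ∀ u, (r u : ℝ) ≤ ∑ S ∈ 𝒞, lpMass y S u) (inv : GreedyInvariant 𝒞 c r π y φ e)
    (hm : m ∈ moves 𝒞 r φ) {u : U} (hu : u ∈ m.2) :
    ratio c π m + e u - recharge r y φ e m.1 m.2 (ratio c π m) u ≤
      ratio c π m * ∑ S ∈ newlyUnavailable 𝒞 r φ (assign φ m.1 m.2) u, lpMass y S u := by
  obtain ⟨hS, -, -, havail⟩ := mem_moves.1 hm
  have hρ := ratio_nonneg hc hπ hm
  have hcard := card_assign_of_mem hu (havail u hu).2
  by_cases hfull : (φ u).card + 1 = r u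
  · have hsub : 𝒞.filter (· ∉ φ u) ⊆ newlyUnavailable 𝒞 r φ (assign φ m.1 m.2) u := by
      intro T hT
      rw [mem_filter] at hT
      exact mem_filter.2 ⟨hT.1, ⟨(havail u hu).1, hT.2⟩, fun h => by have := h.1; omega⟩
    have hres := sub_card_add_deficit_le hfeas (inv.subset u)
    have hmass := sum_le_sum_of_subset_of_nonneg hsub fun S _ _ => lpMass_nonneg hy S u
    have hcharge := inv.charge_le u (havail u hu).1 m hm
    have hone : (r u : ℝ) - (φ u).card = 1 := by
      rw [← hfull]
      push_cast
      ring
    rw [recharge, if_pos hu, if_pos hfull]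
    nlinarith
  · have hmem : m.1 ∈ newlyUnavailable 𝒞 r φ (assign φ m.1 m.2) u :=
      mem_filter.2 ⟨hS, havail u hu, fun h => h.2 (by simp [assign_of_mem hu])⟩
    rw [recharge, if_pos hu, if_neg hfull]
    calc _ = ratio c π m * lpMass y m.1 u := by ring
      _ ≤ _ := mul_le_mul_of_nonneg_left
          (single_le_sum (fun S _ => lpMass_nonneg hy S u) hmem) hρ

lemma cost_add_sum_sub_sum_recharge_le (hc : ∀ S ∈ 𝒞, 0 ≤ c S) (hπ : ∀ X, 0 ≤ π X)
    (hy : ∀ S B, 0 ≤ y S B) (hfeas : ∀ u, (r u : ℝ) ≤ ∑ S ∈ 𝒞, lpMass y S u)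
    (inv : GreedyInvariant 𝒞 c r π y φ e) (hm : m ∈ moves 𝒞 r φ)
    (hmin : ∀ m' ∈ moves 𝒞 r φ, ratio c π m ≤ ratio c π m') :
    c m.1 * gpi π m.2 + (∑ u, e u - ∑ u, recharge r y φ e m.1 m.2 (ratio c π m) u) ≤
      potential 𝒞 c r π y φ - potential 𝒞 c r π y (assign φ m.1 m.2) := by
  set ρ := ratio c π m
  set e' := recharge r y φ e m.1 m.2 ρ
  have hρ : 0 ≤ ρ := ratio_nonneg hc hπ hm
  have hcharges : ∑ u, e u - ∑ u, e' u = ∑ u ∈ m.2, (e u - e' u) := by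
    rw [← sum_sub_distrib]
    exact (sum_subset (subset_univ _) fun u _ hu => by simp [e', recharge, hu]).symm
  calc c m.1 * gpi π m.2 + (∑ u, e u - ∑ u, e' u) = ∑ u ∈ m.2, (ρ + e u - e' u) := by
        rw [hcharges, ← ratio_mul_card (mem_moves.1 hm).2.1, mul_comm, ← nsmul_eq_mul,
          ← sum_const, ← sum_add_distrib]
        simp only [add_sub_assoc, ρ]
    _ ≤ ∑ u ∈ m.2, ρ * ∑ S ∈ newlyUnavailable 𝒞 r φ (assign φ m.1 m.2) u, lpMass y S u :=
        sum_le_sum fun u hu => add_sub_recharge_le hc hπ hy hfeas inv hm hu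
    _ ≤ ∑ u, ρ * ∑ S ∈ newlyUnavailable 𝒞 r φ (assign φ m.1 m.2) u, lpMass y S u :=
        sum_le_sum_of_subset_of_nonneg (subset_univ _) fun u _ _ =>
          mul_nonneg hρ (sum_nonneg fun S _ => lpMass_nonneg hy S u)
    _ ≤ _ := by
        rw [← mul_sum]
        exact mul_sum_lpMass_newlyUnavailable_le hc hπ hy hmin (subset_assign φ _ _)

/-- The cheapest ratio can only grow, so deferred charges stay below deficit times ratio. -/
lemma GreedyInvariant.assign (hy : ∀ S B, 0 ≤ y S B)
    (hcap : ∀ S ∈ 𝒞, ∑ B ∈ S.powerset, y S B ≤ 1) (inv : GreedyInvariant 𝒞 c r π y φ e)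
    (hm : m ∈ moves 𝒞 r φ) (hmin : ∀ m' ∈ moves 𝒞 r φ, ratio c π m ≤ ratio c π m') :
    GreedyInvariant 𝒞 c r π y (assign φ m.1 m.2) (recharge r y φ e m.1 m.2 (ratio c π m)) := by
  obtain ⟨hS, -, hsub, havail⟩ := mem_moves.1 hm
  refine ⟨fun u => ?_, fun u T hT => ?_, fun u => ?_, fun u h => ?_, fun u h m' hm' => ?_⟩ <;>
    by_cases hu : u ∈ m.2
  · rw [assign_of_mem hu]
    exact insert_subset hS (inv.subset u)
  · rw [assign_of_notMem hu]
    exact inv.subset u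
  · rw [assign_of_mem hu, mem_insert] at hT
    rcases hT with rfl | hT
    exacts [hsub hu, inv.mem u T hT]
  · rw [assign_of_notMem hu] at hT
    exact inv.mem u T hT
  · rw [card_assign_of_mem hu (havail u hu).2]
    exact (havail u hu).1
  · rw [assign_of_notMem hu]
    exact inv.card_le u
  · rw [card_assign_of_mem hu (havail u hu).2] at h
    simp [recharge, hu, h]
  · rw [assign_of_notMem hu] at h
    simp [recharge, hu, inv.charge_eq_zero u h]
  all_goals have hm'φ := moves_subset_of_subset (subset_assign φ m.1 m.2) hm'
  · rw [card_assign_of_mem hu (havail u hu).2] at h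
    rw [recharge, if_pos hu, if_neg h.ne, deficit_assign_of_mem hu (havail u hu).2, add_mul]
    exact add_le_add (inv.charge_le u (havail u hu).1 m' hm'φ) <|
      mul_le_mul_of_nonneg_left (hmin m' hm'φ) (sub_nonneg.2 (lpMass_le_one hy hcap hS u))
  · rw [assign_of_notMem hu] at h
    rw [recharge, if_neg hu, deficit, assign_of_notMem hu]
    exact inv.charge_le u h m' hm'φ

lemma greedyInvariant_empty : GreedyInvariant 𝒞 c r π y (fun _ => ∅) 0 where
  subset _ := empty_subset _
  mem _ _ h := absurd h (notMem_empty _)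
  card_le _ := by simp
  charge_eq_zero _ _ := rfl
  charge_le _ _ _ _ := by simp [deficit]

theorem exists_complete_of_greedyInvariant (hc : ∀ S ∈ 𝒞, 0 ≤ c S) (hπ : ∀ X, 0 ≤ π X)
    (hy : ∀ S B, 0 ≤ y S B) (hfeas : ∀ u, (r u : ℝ) ≤ ∑ S ∈ 𝒞, lpMass y S u)
    (hcap : ∀ S ∈ 𝒞, ∑ B ∈ S.powerset, y S B ≤ 1) (inv : GreedyInvariant 𝒞 c r π y φ e) :
    ∃ ψ : U → Finset (Finset U), (∀ u, ψ u ⊆ 𝒞 ∧ (ψ u).card = r u ∧ ∀ S ∈ ψ u, u ∈ S) ∧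
      cost 𝒞 c π ψ ≤ cost 𝒞 c π φ + potential 𝒞 c r π y φ - ∑ u, e u := by
  induction hN : remaining r φ using Nat.strong_induction_on generalizing φ e with
  | _ N ih =>
  by_cases hfull : ∀ u, (φ u).card = r u
  · refine ⟨φ, fun u => ⟨inv.subset u, hfull u, inv.mem u⟩, ?_⟩
    rw [sum_eq_zero fun u _ => inv.charge_eq_zero u (hfull u)]
    linarith [potential_nonneg hc hπ hy (𝒞 := 𝒞) (r := r) φ]
  obtain ⟨u, hu⟩ := not_forall.1 hfull
  obtain ⟨m, hm, hmin⟩ := (moves 𝒞 r φ).exists_min_image (ratio c π)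
    (moves_nonempty hfeas hy hcap inv.subset ((inv.card_le u).lt_of_ne hu))
  obtain ⟨ψ, hψ, hcost⟩ := ih _ (hN ▸ remaining_assign_lt hm) (inv.assign hy hcap hm hmin) rfl
  refine ⟨ψ, hψ, ?_⟩
  linarith [cost_assign_le hc hπ (mem_moves.1 hm).1 m.2 (φ := φ),
    cost_add_sum_sub_sum_recharge_le hc hπ hy hfeas inv hm hmin]

end Greedy

end UniversalMulticover

theorem stmt10_general {U : Type*} [Fintype U] [DecidableEq U]
    (𝒞 : Finset (Finset U)) (c : Finset U → ℝ) (hc : ∀ S ∈ 𝒞, 0 ≤ c S)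
    (r : U → ℕ)
    (π : Finset U → ℝ) (hπ : ∀ X, 0 ≤ π X)
    (y : Finset U → Finset U → ℝ) (hy : ∀ S B : Finset U, 0 ≤ y S B)
    (hfeas : ∀ u : U,
      (r u : ℝ) ≤ ∑ S ∈ 𝒞, ∑ B ∈ S.powerset.filter (fun B : Finset U => u ∈ B), y S B)
    (hcap : ∀ S ∈ 𝒞, ∑ B ∈ S.powerset, y S B ≤ 1) :
    ∃ φ : U → Finset (Finset U),
      (∀ u : U, φ u ⊆ 𝒞 ∧ (φ u).card = r u ∧ ∀ S ∈ φ u, u ∈ S) ∧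
      ∑ S ∈ 𝒞, c S * gpi π (Finset.univ.filter (fun u : U => S ∈ φ u)) ≤
        (∑ i ∈ Finset.range (Fintype.card U), (1 : ℝ) / (i + 1)) *
          ∑ S ∈ 𝒞, c S * ∑ B ∈ S.powerset, y S B * gpi π B := by
  obtain ⟨φ, hφ, hcost⟩ := UniversalMulticover.exists_complete_of_greedyInvariant hc hπ hy hfeas
    hcap (UniversalMulticover.greedyInvariant_empty (c := c) (π := π))
  have hcost_empty : UniversalMulticover.cost 𝒞 c π (fun _ => ∅) = 0 := by
    simp [UniversalMulticover.cost]
  have hharmonic : (harmonic (Fintype.card U) : ℝ) =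
      ∑ i ∈ range (Fintype.card U), (1 : ℝ) / (i + 1) := by
    simp [harmonic]
  refine ⟨φ, hφ, ?_⟩
  calc UniversalMulticover.cost 𝒞 c π φ
      ≤ UniversalMulticover.potential 𝒞 c r π y (fun _ => ∅) := by simpa [hcost_empty] using hcost
    _ ≤ _ := hharmonic ▸ UniversalMulticover.potential_le hc hπ hy _

/-- The `H_n`-approximation guarantee for universal stochastic constrained set multicover
relative to the configuration LP (CONF-LP-CSM): any feasible fractional solution can be
rounded (e.g. by the greedy algorithm) to an assignment `φ` of exactly `r(u)` distinct
sets containing each element `u`, of expected cost at most `H_n` times the LP cost. -/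
theorem stmt10 {U : Type*} [Fintype U] [DecidableEq U]
    (𝒞 : Finset (Finset U)) (c : Finset U → ℝ) (hc : ∀ S ∈ 𝒞, 0 ≤ c S)
    (r : U → ℕ) (hr : ∀ u, 1 ≤ r u)
    (π : Finset U → ℝ) (hπ : ∀ X, 0 ≤ π X) (hsum : ∑ X : Finset U, π X = 1)
    (y : Finset U → Finset U → ℝ) (hy : ∀ S B : Finset U, 0 ≤ y S B)
    (hfeas : ∀ u : U,
      (r u : ℝ) ≤ ∑ S ∈ 𝒞, ∑ B ∈ S.powerset.filter (fun B : Finset U => u ∈ B), y S B)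
    (hcap : ∀ S ∈ 𝒞, ∑ B ∈ S.powerset, y S B ≤ 1) :
    ∃ φ : U → Finset (Finset U),
      (∀ u : U, φ u ⊆ 𝒞 ∧ (φ u).card = r u ∧ ∀ S ∈ φ u, u ∈ S) ∧
      ∑ S ∈ 𝒞, c S * gpi π (Finset.univ.filter (fun u : U => S ∈ φ u)) ≤
        (∑ i ∈ Finset.range (Fintype.card U), (1 : ℝ) / (i + 1)) *
          ∑ S ∈ 𝒞, c S * ∑ B ∈ S.powerset, y S B * gpi π B :=
  stmt10_general 𝒞 c hc r π hπ y hy hfeas hcap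
end

section
/- In the independent activation model (each client c ∈ C activated independently with probability p_c, so g(B) = 1 − ∏_{c∈B}(1 − p_c)), for every feasible fractional solution (y^f_B)_{f∈F, B⊆C} to the configuration LP for facility location—i.e., y^f_B ≥ 0 and ∑_{f∈F} ∑_{B⊆C, c∈B} y^f_B ≥ 1 for every c ∈ C—there exist nonnegative reals (x^f_c)_{c∈C,f∈F} and (x̄^f_c)_{c∈C,f∈F} with ∑_{f∈F}(x^f_c + x̄^f_c) ≥ 1 for every c ∈ C, such that ∑_{f∈F} o(f)·max_{c∈C} x^f_c + ∑_{f∈F} o(f) ∑_{c∈C} p_c·x̄^f_c + ∑_{c∈C} ∑_{f∈F} p_c·d(c,f)·(x^f_c + x̄^f_c) ≤ (e/(e−1)) · ( ∑_{f∈F} o(f) ∑_{B⊆C} y^f_B·g(B) + ∑_{c∈C} ∑_{f∈F} p_c·d(c,f) ∑_{B⊆C, c∈B} y^f_B ). In particular the optimum of (LP-FL) is at most e/(e−1) times the optimum of (CONF-LP-FL). -/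
open Finset

/-- Reduction from the configuration LP (CONF-LP-FL) to the rent-or-buy LP (LP-FL) for
universal stochastic facility location in the independent activation model, losing a
factor `e/(e−1)`. Here `g(B) = 1 − ∏_{c∈B}(1 − p_c)`. -/
theorem stmt13 {C F : Type*} [Fintype C] [DecidableEq C] [Fintype F] [Nonempty C]
    (o : F → ℝ) (ho : ∀ f, 0 ≤ o f)
    (d : C → F → ℝ) (hd : ∀ c f, 0 ≤ d c f)
    (p : C → ℝ) (hp0 : ∀ c, 0 ≤ p c) (hp1 : ∀ c, p c ≤ 1)
    (y : F → Finset C → ℝ) (hy : ∀ f B, 0 ≤ y f B)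
    (hfeas : ∀ c : C,
      1 ≤ ∑ f : F, ∑ B ∈ Finset.univ.filter (fun B : Finset C => c ∈ B), y f B) :
    ∃ x xb : C → F → ℝ,
      (∀ c f, 0 ≤ x c f) ∧ (∀ c f, 0 ≤ xb c f) ∧
      (∀ c : C, 1 ≤ ∑ f : F, (x c f + xb c f)) ∧
      ∑ f : F, o f * (Finset.univ.sup' Finset.univ_nonempty fun c : C => x c f) +
          ∑ f : F, o f * ∑ c : C, p c * xb c f +
          ∑ c : C, ∑ f : F, p c * d c f * (x c f + xb c f) ≤
        Real.exp 1 / (Real.exp 1 - 1) *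
          (∑ f : F, o f * ∑ B : Finset C, y f B * (1 - ∏ c ∈ B, (1 - p c)) +
            ∑ c : C, ∑ f : F,
              p c * d c f * ∑ B ∈ Finset.univ.filter (fun B : Finset C => c ∈ B), y f B) := by
  classical
  set ρ : ℝ := Real.exp 1 / (Real.exp 1 - 1) with hρdef
  set g : Finset C → ℝ := fun B => 1 - ∏ c ∈ B, (1 - p c) with hg
  set S : Finset C → ℝ := fun B => ∑ c ∈ B, p c with hS
  have he1 : (1:ℝ) < Real.exp 1 := by
    have := Real.add_one_le_exp (1:ℝ); linarith
  have hρpos : 0 < ρ := div_pos (by linarith) (by linarith)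
  have hρ1 : (1:ℝ) ≤ ρ := by
    rw [hρdef, le_div_iff₀ (by linarith)]; linarith
  have hρmul : ρ * (1 - Real.exp (-1)) = 1 := by
    rw [hρdef, Real.exp_neg]
    have h0 : Real.exp 1 ≠ 0 := (Real.exp_pos 1).ne'
    have h1 : Real.exp 1 - 1 ≠ 0 := by linarith
    field_simp
  have hgnn : ∀ B, 0 ≤ g B := by
    intro B
    have : ∏ c ∈ B, (1 - p c) ≤ 1 :=
      Finset.prod_le_one (fun c _ => by linarith [hp1 c]) (fun c _ => by linarith [hp0 c])
    simp only [hg]; linarith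
  have hSnn : ∀ B, 0 ≤ S B := fun B => Finset.sum_nonneg fun c _ => hp0 c
  have hprodexp : ∀ B : Finset C, ∏ c ∈ B, (1 - p c) ≤ Real.exp (-(S B)) := by
    intro B
    have : Real.exp (-(S B)) = ∏ c ∈ B, Real.exp (-(p c)) := by
      rw [← Real.exp_sum, hS]
      simp [Finset.sum_neg_distrib]
    rw [this]
    refine Finset.prod_le_prod (fun c _ => by linarith [hp1 c]) (fun c _ => ?_)
    have := Real.add_one_le_exp (-(p c)); linarith
  have key1 : ∀ B : Finset C, 1 ≤ S B → 1 ≤ ρ * g B := by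
    intro B hB
    have h1 : Real.exp (-(S B)) ≤ Real.exp (-1) := Real.exp_le_exp.mpr (by linarith)
    have h2 : 1 - Real.exp (-1) ≤ g B := by
      have := hprodexp B; simp only [hg]; linarith
    calc (1:ℝ) = ρ * (1 - Real.exp (-1)) := hρmul.symm
    _ ≤ ρ * g B := by nlinarith
  have key2 : ∀ B : Finset C, S B ≤ 1 → S B ≤ ρ * g B := by
    intro B hB
    -- convexity: exp(-s) ≤ (1-s) + s * exp(-1) for s ∈ [0,1]
    have hs0 := hSnn B
    have hconv : Real.exp (-(S B)) ≤ (1 - S B) * Real.exp 0 + S B * Real.exp (-1) := by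
      have := convexOn_exp.2 (Set.mem_univ (0:ℝ)) (Set.mem_univ (-1:ℝ))
        (by linarith : (0:ℝ) ≤ 1 - S B) hs0 (by ring)
      simpa [smul_eq_mul, mul_comm] using this
    have h2 : (1 - Real.exp (-1)) * S B ≤ g B := by
      have := hprodexp B
      simp only [hg, Real.exp_zero] at *
      nlinarith
    calc S B = ρ * (1 - Real.exp (-1)) * S B := by rw [hρmul]; ring
    _ ≤ ρ * g B := by nlinarith
  refine ⟨fun c f => ∑ B ∈ Finset.univ.filter (fun B : Finset C => c ∈ B),
            (if 1 ≤ S B then y f B else 0),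
          fun c f => ∑ B ∈ Finset.univ.filter (fun B : Finset C => c ∈ B),
            (if 1 ≤ S B then 0 else y f B), ?_, ?_, ?_, ?_⟩
  · intro c f; exact Finset.sum_nonneg fun B _ => by split <;> simp [hy]
  · intro c f; exact Finset.sum_nonneg fun B _ => by split <;> simp [hy]
  · intro c
    have hsum : ∀ f, (∑ B ∈ Finset.univ.filter (fun B : Finset C => c ∈ B),
        (if 1 ≤ S B then y f B else 0)) + (∑ B ∈ Finset.univ.filter (fun B : Finset C => c ∈ B),
        (if 1 ≤ S B then 0 else y f B)) = ∑ B ∈ Finset.univ.filter (fun B : Finset C => c ∈ B), y f B := by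
      intro f
      rw [← Finset.sum_add_distrib]
      exact Finset.sum_congr rfl fun B _ => by split <;> ring
    calc (1:ℝ) ≤ ∑ f : F, ∑ B ∈ Finset.univ.filter (fun B : Finset C => c ∈ B), y f B := hfeas c
    _ = _ := by exact Finset.sum_congr rfl fun f _ => (hsum f).symm
  · -- main cost bound
    have hxsum : ∀ c f, (∑ B ∈ Finset.univ.filter (fun B : Finset C => c ∈ B),
        (if 1 ≤ S B then y f B else 0)) + (∑ B ∈ Finset.univ.filter (fun B : Finset C => c ∈ B),
        (if 1 ≤ S B then 0 else y f B)) = ∑ B ∈ Finset.univ.filter (fun B : Finset C => c ∈ B), y f B := by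
      intro c f
      rw [← Finset.sum_add_distrib]
      exact Finset.sum_congr rfl fun B _ => by split <;> ring
    -- facility piece per f
    have hfac : ∀ f : F,
        o f * (Finset.univ.sup' Finset.univ_nonempty fun c : C =>
            ∑ B ∈ Finset.univ.filter (fun B : Finset C => c ∈ B), (if 1 ≤ S B then y f B else 0)) +
          o f * ∑ c : C, p c * ∑ B ∈ Finset.univ.filter (fun B : Finset C => c ∈ B),
            (if 1 ≤ S B then 0 else y f B)
        ≤ ρ * (o f * ∑ B : Finset C, y f B * g B) := by
      intro f
      have hsup : (Finset.univ.sup' Finset.univ_nonempty fun c : C =>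
          ∑ B ∈ Finset.univ.filter (fun B : Finset C => c ∈ B), (if 1 ≤ S B then y f B else 0))
          ≤ ∑ B : Finset C, (if 1 ≤ S B then y f B else 0) := by
        refine Finset.sup'_le _ _ fun c _ => ?_
        refine Finset.sum_le_sum_of_subset_of_nonneg (Finset.filter_subset _ _) ?_
        intro B _ _; split <;> simp [hy]
      have hrent : (∑ c : C, p c * ∑ B ∈ Finset.univ.filter (fun B : Finset C => c ∈ B),
            (if 1 ≤ S B then 0 else y f B))
          = ∑ B : Finset C, S B * (if 1 ≤ S B then 0 else y f B) := by
        have : ∀ c : C, p c * ∑ B ∈ Finset.univ.filter (fun B : Finset C => c ∈ B),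
            (if 1 ≤ S B then 0 else y f B)
            = ∑ B : Finset C, (if c ∈ B then p c * (if 1 ≤ S B then 0 else y f B) else 0) := by
          intro c
          rw [Finset.mul_sum, Finset.sum_filter]
        rw [Finset.sum_congr rfl fun c _ => this c, Finset.sum_comm]
        refine Finset.sum_congr rfl fun B _ => ?_
        rw [Finset.sum_ite_mem, Finset.univ_inter, ← Finset.sum_mul, hS]
      have hkey : (∑ B : Finset C, (if 1 ≤ S B then y f B else 0)) +
          (∑ B : Finset C, S B * (if 1 ≤ S B then 0 else y f B))
          ≤ ρ * ∑ B : Finset C, y f B * g B := by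
        rw [Finset.mul_sum, ← Finset.sum_add_distrib]
        refine Finset.sum_le_sum fun B _ => ?_
        by_cases hB : 1 ≤ S B
        · simp only [hB, if_true]
          have := key1 B hB
          nlinarith [hy f B, hgnn B]
        · simp only [hB, if_false]
          have := key2 B (le_of_not_ge hB)
          nlinarith [hy f B, hSnn B, hgnn B]
      calc o f * _ + o f * _ ≤ o f * ((∑ B : Finset C, (if 1 ≤ S B then y f B else 0)) +
            (∑ B : Finset C, S B * (if 1 ≤ S B then 0 else y f B))) := by
            rw [mul_add]
            exact add_le_add (mul_le_mul_of_nonneg_left hsup (ho f))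
              (le_of_eq (by rw [hrent]))
      _ ≤ o f * (ρ * ∑ B : Finset C, y f B * g B) := by
            have := hkey
            have h0 := ho f
            nlinarith
      _ = ρ * (o f * ∑ B : Finset C, y f B * g B) := by ring
    -- sum over f
    have hfacsum :
        (∑ f : F, o f * (Finset.univ.sup' Finset.univ_nonempty fun c : C =>
            ∑ B ∈ Finset.univ.filter (fun B : Finset C => c ∈ B), (if 1 ≤ S B then y f B else 0))) +
          (∑ f : F, o f * ∑ c : C, p c * ∑ B ∈ Finset.univ.filter (fun B : Finset C => c ∈ B),
            (if 1 ≤ S B then 0 else y f B))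
        ≤ ρ * ∑ f : F, o f * ∑ B : Finset C, y f B * g B := by
      rw [← Finset.sum_add_distrib, Finset.mul_sum]
      exact Finset.sum_le_sum fun f _ => hfac f
    have hconn :
        (∑ c : C, ∑ f : F, p c * d c f *
            ((∑ B ∈ Finset.univ.filter (fun B : Finset C => c ∈ B), (if 1 ≤ S B then y f B else 0)) +
             (∑ B ∈ Finset.univ.filter (fun B : Finset C => c ∈ B), (if 1 ≤ S B then 0 else y f B))))
        ≤ ρ * ∑ c : C, ∑ f : F, p c * d c f *
            ∑ B ∈ Finset.univ.filter (fun B : Finset C => c ∈ B), y f B := by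
      have heq : (∑ c : C, ∑ f : F, p c * d c f *
            ((∑ B ∈ Finset.univ.filter (fun B : Finset C => c ∈ B), (if 1 ≤ S B then y f B else 0)) +
             (∑ B ∈ Finset.univ.filter (fun B : Finset C => c ∈ B), (if 1 ≤ S B then 0 else y f B))))
          = ∑ c : C, ∑ f : F, p c * d c f *
            ∑ B ∈ Finset.univ.filter (fun B : Finset C => c ∈ B), y f B := by
        refine Finset.sum_congr rfl fun c _ => Finset.sum_congr rfl fun f _ => ?_
        rw [hxsum c f]
      rw [heq]
      have hnn : 0 ≤ ∑ c : C, ∑ f : F, p c * d c f *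
            ∑ B ∈ Finset.univ.filter (fun B : Finset C => c ∈ B), y f B := by
        refine Finset.sum_nonneg fun c _ => Finset.sum_nonneg fun f _ => ?_
        refine mul_nonneg (mul_nonneg (hp0 c) (hd c f)) (Finset.sum_nonneg fun B _ => hy f B)
      nlinarith
    rw [mul_add]
    linarith
end

section
/- In the independent activation model (each client c ∈ C activated independently with probability p_c, so g(B) = 1 − ∏_{c∈B}(1 − p_c)), for every feasible fractional solution (y^e_B)_{e∈E, B⊆C} to (CONF-LP-MC)—i.e., y^e_B ≥ 0 and for every client c and every path P ∈ 𝒫_c, ∑_{e∈P} ∑_{B⊆C, c∈B} y^e_B ≥ 1—there exist nonnegative reals (x^e)_{e∈E} and (x̄^e_c)_{c∈C,e∈E} with ∑_{e∈P}(x^e + x̄^e_c) ≥ 1 for every c ∈ C and every P ∈ 𝒫_c, such that ∑_{e∈E} c_e·x^e + ∑_{e∈E} c_e ∑_{c∈C} p_c·x̄^e_c ≤ (e/(e−1)) · ∑_{e∈E} c_e ∑_{B⊆C} y^e_B·g(B). In particular the optimal value of (LP-MC) is at most e/(e−1) times the optimal value of (CONF-LP-MC). -/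
open Finset

lemma key_exp (s : ℝ) (hs : 0 ≤ s) :
    (1 - Real.exp (-1)) * min 1 s ≤ 1 - Real.exp (-s) := by
  rcases le_total 1 s with h | h
  · rw [min_eq_left h]
    have : Real.exp (-s) ≤ Real.exp (-1) := Real.exp_le_exp.mpr (by linarith)
    linarith
  · rw [min_eq_right h]
    have hc := convexOn_exp.2 (Set.mem_univ (0:ℝ)) (Set.mem_univ (-1:ℝ))
      (by linarith : (0:ℝ) ≤ 1 - s) hs (by ring)
    simp only [smul_eq_mul, mul_zero, mul_neg, mul_one, zero_add, Real.exp_zero] at hc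
    nlinarith [Real.exp_pos (-1)]

lemma key_min {C : Type*} [Fintype C] (p : C → ℝ) (hp0 : ∀ c, 0 ≤ p c)
    (hp1 : ∀ c, p c ≤ 1) (B : Finset C) :
    min 1 (∑ c ∈ B, p c) ≤
      Real.exp 1 / (Real.exp 1 - 1) * (1 - ∏ c ∈ B, (1 - p c)) := by
  set s := ∑ c ∈ B, p c with hsdef
  have hs : 0 ≤ s := Finset.sum_nonneg fun c _ => hp0 c
  have hprod : ∏ c ∈ B, (1 - p c) ≤ Real.exp (-s) := by
    calc ∏ c ∈ B, (1 - p c) ≤ ∏ c ∈ B, Real.exp (-(p c)) := by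
          apply Finset.prod_le_prod
          · intro c _; linarith [hp1 c]
          · intro c _; linarith [Real.add_one_le_exp (-(p c))]
      _ = Real.exp (∑ c ∈ B, -(p c)) := (Real.exp_sum _ _).symm
      _ = Real.exp (-s) := by rw [← Finset.sum_neg_distrib]
  have h1 : (1 - Real.exp (-1)) * min 1 s ≤ 1 - ∏ c ∈ B, (1 - p c) := by
    have := key_exp s hs
    linarith
  have hepos := Real.exp_pos 1
  have he2 : (2:ℝ) ≤ Real.exp 1 := by linarith [Real.add_one_le_exp 1]
  have hinv : Real.exp (-1) = (Real.exp 1)⁻¹ := by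
    rw [Real.exp_neg]
  rw [hinv] at h1
  have hne : Real.exp 1 ≠ 0 := ne_of_gt hepos
  rw [div_mul_eq_mul_div, le_div_iff₀ (by linarith : (0:ℝ) < Real.exp 1 - 1)]
  have h2 := mul_le_mul_of_nonneg_left h1 hepos.le
  have h3 : Real.exp 1 * ((1 - (Real.exp 1)⁻¹) * min 1 s)
      = (Real.exp 1 - 1) * min 1 s := by
    field_simp
  rw [h3] at h2
  linarith

/-- Reduction from the configuration LP (CONF-LP-MC) to the rent-or-buy LP (LP-MC) for
universal stochastic multicut in the independent activation model, losing a factor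
`e/(e−1)`. Here `E` is the edge set with costs `ce`, `Paths c` is the family of paths
(edge sets) of client `c` that must be cut, and `g(B) = 1 − ∏_{c∈B}(1 − p_c)`. -/
theorem stmt15 {E C : Type*} [Fintype E] [DecidableEq E] [Fintype C] [DecidableEq C]
    (ce : E → ℝ) (hce : ∀ e, 0 ≤ ce e)
    (Paths : C → Finset (Finset E))
    (p : C → ℝ) (hp0 : ∀ c, 0 ≤ p c) (hp1 : ∀ c, p c ≤ 1)
    (y : E → Finset C → ℝ) (hy : ∀ e B, 0 ≤ y e B)
    (hfeas : ∀ c : C, ∀ P ∈ Paths c,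
      1 ≤ ∑ e ∈ P, ∑ B ∈ Finset.univ.filter (fun B : Finset C => c ∈ B), y e B) :
    ∃ x : E → ℝ, ∃ xb : C → E → ℝ,
      (∀ e, 0 ≤ x e) ∧ (∀ c e, 0 ≤ xb c e) ∧
      (∀ c : C, ∀ P ∈ Paths c, 1 ≤ ∑ e ∈ P, (x e + xb c e)) ∧
      ∑ e : E, ce e * x e + ∑ e : E, ce e * ∑ c : C, p c * xb c e ≤
        Real.exp 1 / (Real.exp 1 - 1) *
          ∑ e : E, ce e * ∑ B : Finset C, y e B * (1 - ∏ c ∈ B, (1 - p c)) := by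
  set s : Finset C → ℝ := fun B => ∑ c ∈ B, p c with hsdef
  refine ⟨fun e => ∑ B ∈ Finset.univ.filter (fun B : Finset C => 1 < s B), y e B,
    fun c e => ∑ B ∈ Finset.univ.filter (fun B : Finset C => c ∈ B ∧ s B ≤ 1), y e B,
    fun e => Finset.sum_nonneg fun B _ => hy e B,
    fun c e => Finset.sum_nonneg fun B _ => hy e B, ?_, ?_⟩
  · -- feasibility
    intro c P hP
    refine le_trans (hfeas c P hP) (Finset.sum_le_sum fun e _ => ?_)
    have hsplit : ∑ B ∈ Finset.univ.filter (fun B : Finset C => c ∈ B), y e B =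
        ∑ B ∈ Finset.univ.filter (fun B : Finset C => c ∈ B ∧ 1 < s B), y e B +
        ∑ B ∈ Finset.univ.filter (fun B : Finset C => c ∈ B ∧ s B ≤ 1), y e B := by
      have e1 : (Finset.univ.filter (fun B : Finset C => c ∈ B)).filter (fun B => s B ≤ 1)
          = Finset.univ.filter (fun B : Finset C => c ∈ B ∧ s B ≤ 1) := by
        rw [Finset.filter_filter]
      have e2 : (Finset.univ.filter (fun B : Finset C => c ∈ B)).filter (fun B => ¬ s B ≤ 1)
          = Finset.univ.filter (fun B : Finset C => c ∈ B ∧ 1 < s B) := by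
        rw [Finset.filter_filter]; simp only [not_le]
      rw [← Finset.sum_filter_add_sum_filter_not
        (Finset.univ.filter (fun B : Finset C => c ∈ B)) (fun B => s B ≤ 1), e1, e2, add_comm]
    rw [hsplit]
    have hmono : ∑ B ∈ Finset.univ.filter (fun B : Finset C => c ∈ B ∧ 1 < s B), y e B ≤
        ∑ B ∈ Finset.univ.filter (fun B : Finset C => 1 < s B), y e B := by
      apply Finset.sum_le_sum_of_subset_of_nonneg
      · intro B hB
        simp only [Finset.mem_filter] at hB ⊢
        exact ⟨hB.1, hB.2.2⟩
      · intro B _ _; exact hy e B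
    linarith
  · -- cost
    have hedge : ∀ e : E,
        (∑ B ∈ Finset.univ.filter (fun B : Finset C => 1 < s B), y e B) +
        ∑ c : C, p c * ∑ B ∈ Finset.univ.filter (fun B : Finset C => c ∈ B ∧ s B ≤ 1), y e B
        = ∑ B : Finset C, min 1 (s B) * y e B := by
      intro e
      have hrent : ∑ c : C, p c * ∑ B ∈ Finset.univ.filter
          (fun B : Finset C => c ∈ B ∧ s B ≤ 1), y e B
          = ∑ B : Finset C, (if s B ≤ 1 then s B * y e B else 0) := by
        simp_rw [Finset.sum_filter, Finset.mul_sum]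
        rw [Finset.sum_comm]
        refine Finset.sum_congr rfl fun B _ => ?_
        by_cases h : s B ≤ 1
        · simp only [h, and_true, if_true, mul_ite, mul_zero]
          rw [Finset.sum_ite_mem, Finset.univ_inter]
          simp only [hsdef]
          rw [← Finset.sum_mul]
        · simp [h]
      rw [hrent, Finset.sum_filter]
      rw [← Finset.sum_add_distrib]
      refine Finset.sum_congr rfl fun B _ => ?_
      by_cases h : s B ≤ 1
      · rw [if_neg (not_lt.mpr h), if_pos h, zero_add, min_eq_right h]
      · rw [if_pos (not_le.mp h), if_neg h, add_zero,
          min_eq_left (le_of_lt (not_le.mp h)), one_mul]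
    have hstep : ∀ e : E, ce e * ((∑ B ∈ Finset.univ.filter (fun B : Finset C => 1 < s B), y e B) +
        ∑ c : C, p c * ∑ B ∈ Finset.univ.filter (fun B : Finset C => c ∈ B ∧ s B ≤ 1), y e B)
        ≤ Real.exp 1 / (Real.exp 1 - 1) *
          (ce e * ∑ B : Finset C, y e B * (1 - ∏ c ∈ B, (1 - p c))) := by
      intro e
      rw [hedge e, ← mul_assoc, mul_comm (Real.exp 1 / (Real.exp 1 - 1)) (ce e), mul_assoc]
      apply mul_le_mul_of_nonneg_left _ (hce e)
      rw [Finset.mul_sum]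
      refine Finset.sum_le_sum fun B _ => ?_
      have h := mul_le_mul_of_nonneg_left (key_min p hp0 hp1 B) (hy e B)
      calc min 1 (s B) * y e B = y e B * min 1 (s B) := mul_comm _ _
        _ ≤ y e B * (Real.exp 1 / (Real.exp 1 - 1) * (1 - ∏ c ∈ B, (1 - p c))) := h
        _ = Real.exp 1 / (Real.exp 1 - 1) * (y e B * (1 - ∏ c ∈ B, (1 - p c))) := by ring
    calc ∑ e : E, ce e * (∑ B ∈ Finset.univ.filter (fun B : Finset C => 1 < s B), y e B) +
          ∑ e : E, ce e * ∑ c : C, p c * ∑ B ∈ Finset.univ.filter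
            (fun B : Finset C => c ∈ B ∧ s B ≤ 1), y e B
        = ∑ e : E, ce e * ((∑ B ∈ Finset.univ.filter (fun B : Finset C => 1 < s B), y e B) +
            ∑ c : C, p c * ∑ B ∈ Finset.univ.filter
              (fun B : Finset C => c ∈ B ∧ s B ≤ 1), y e B) := by
          rw [← Finset.sum_add_distrib]; exact Finset.sum_congr rfl fun e _ => by ring
      _ ≤ ∑ e : E, Real.exp 1 / (Real.exp 1 - 1) *
            (ce e * ∑ B : Finset C, y e B * (1 - ∏ c ∈ B, (1 - p c))) :=
          Finset.sum_le_sum fun e _ => hstep e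
      _ = Real.exp 1 / (Real.exp 1 - 1) *
            ∑ e : E, ce e * ∑ B : Finset C, y e B * (1 - ∏ c ∈ B, (1 - p c)) := by
          rw [Finset.mul_sum]
end

section
/- Let G be a finite tree with edge costs c_e ≥ 0, let C be a finite set of clients where client c has terminals s_c ≠ t_c and activation probability p_c ∈ [0,1], and let P_c denote the edge set of the unique s_c–t_c path in G. For every feasible fractional solution to (LP-MC) on G—nonnegative reals (x^e)_{e∈E} and (x̄^e_c)_{c∈C,e∈E} with ∑_{e∈P_c}(x^e + x̄^e_c) ≥ 1 for every c ∈ C—there exists an integral feasible solution (z^e, z̄^e_c) with values in {0,1} and ∑_{e∈P_c}(z^e + z̄^e_c) ≥ 1 for every c ∈ C, such that ∑_{e∈E} c_e·z^e + ∑_{e∈E} c_e ∑_{c∈C} p_c·z̄^e_c ≤ 3·( ∑_{e∈E} c_e·x^e + ∑_{e∈E} c_e ∑_{c∈C} p_c·x̄^e_c ). -/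
/-!
Every client either has bought LP mass at least 2/3 or rented LP mass at least 1/3 on its path.
Clients of the second kind rent the cheapest edge of their path, which costs at most 3 times
their LP rental cost. For the bought part, root the tree at `r`, let `d v` be the `x`-length of
the `r`–`v` path and cut every edge whose endpoints have different levels `⌊3 d v - θ⌋`. A path
goes up from one end to its vertex `m` closest to the root and then down, so its `x`-length is
`(d a - d m) + (d b - d m)`; if that is at least 2/3, one of the two legs has length at least
1/3 and crosses a level. An edge `uv` with `d v = d u + x_uv` crosses on average `3 x_uv` levels
as `θ` ranges over `[0, 1]`, so some `θ` cuts at cost at most `3 ∑ c_e x_e`.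
-/

open Finset MeasureTheory

lemma intervalIntegrable_floor_sub (c a b : ℝ) :
    IntervalIntegrable (fun θ : ℝ => (⌊c - θ⌋ : ℝ)) volume a b :=
  Antitone.intervalIntegrable fun _ _ h => Int.cast_le.2 (Int.floor_le_floor (by linarith))

lemma intervalIntegrable_fract_sub (c a b : ℝ) :
    IntervalIntegrable (fun θ : ℝ => Int.fract (c - θ)) volume a b :=
  ((continuous_const.sub continuous_id).intervalIntegrable a b).sub
    (intervalIntegrable_floor_sub c a b)

lemma integral_fract_sub (c : ℝ) :
    ∫ θ in (0 : ℝ)..1, Int.fract (c - θ) = ∫ θ in (0 : ℝ)..1, Int.fract θ := by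
  rw [intervalIntegral.integral_comp_sub_left Int.fract c, sub_zero]
  simpa using (Int.fract_periodic ℝ).intervalIntegral_add_eq (c - 1) 0

lemma integral_floor_sub_sub_floor_sub (a b : ℝ) :
    ∫ θ in (0 : ℝ)..1, ((⌊b - θ⌋ : ℝ) - ⌊a - θ⌋) = b - a := by
  have h (θ : ℝ) :
      (⌊b - θ⌋ : ℝ) - ⌊a - θ⌋ = (b - a) - Int.fract (b - θ) + Int.fract (a - θ) := by
    rw [← Int.self_sub_fract (b - θ), ← Int.self_sub_fract (a - θ)]; ring
  simp_rw [h]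
  rw [intervalIntegral.integral_add (intervalIntegrable_const.sub
      (intervalIntegrable_fract_sub b 0 1)) (intervalIntegrable_fract_sub a 0 1),
    intervalIntegral.integral_sub intervalIntegrable_const (intervalIntegrable_fract_sub b 0 1),
    integral_fract_sub, integral_fract_sub]
  simp

lemma exists_sum_mul_floor_sub_sub_floor_sub_le {ι : Type*} (s : Finset ι) (c a b : ι → ℝ) :
    ∃ θ : ℝ, ∑ i ∈ s, c i * ((⌊b i - θ⌋ : ℝ) - ⌊a i - θ⌋) ≤ ∑ i ∈ s, c i * (b i - a i) := by
  by_contra! h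
  have hi : ∀ i ∈ s, IntervalIntegrable
      (fun θ : ℝ => c i * ((⌊b i - θ⌋ : ℝ) - ⌊a i - θ⌋)) volume 0 1 := fun i _ =>
    ((intervalIntegrable_floor_sub _ _ _).sub (intervalIntegrable_floor_sub _ _ _)).const_mul _
  have hF := IntervalIntegrable.sum s hi
  rw [Finset.sum_fn] at hF
  have hpos := intervalIntegral.intervalIntegral_pos_of_pos_on
    (hF.sub (intervalIntegrable_const (c := ∑ i ∈ s, c i * (b i - a i))))
    (fun θ _ => sub_pos.2 (h θ)) zero_lt_one
  rw [intervalIntegral.integral_sub hF intervalIntegrable_const,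
    intervalIntegral.integral_finsetSum hi] at hpos
  simp [intervalIntegral.integral_const_mul, integral_floor_sub_sub_floor_sub] at hpos

lemma Finset.Nonempty.exists_mem_mul_sum_le_sum_mul {α : Type*} {s : Finset α} (hs : s.Nonempty)
    (f g : α → ℝ) (hg : ∀ i ∈ s, 0 ≤ g i) : ∃ i ∈ s, f i * ∑ j ∈ s, g j ≤ ∑ j ∈ s, f j * g j := by
  obtain ⟨i, hi, hmin⟩ := s.exists_min_image f hs
  exact ⟨i, hi, by
    rw [mul_sum]; exact sum_le_sum fun j hj => mul_le_mul_of_nonneg_right (hmin j hj) (hg j hj)⟩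

lemma sum_mul_sum_mul_comm {α C : Type*} [Fintype C] (E : Finset α) (cost : α → ℝ) (p : C → ℝ)
    (f : C → α → ℝ) :
    ∑ e ∈ E, cost e * ∑ c, p c * f c e = ∑ c, p c * ∑ e ∈ E, cost e * f c e := by
  simp only [mul_sum]
  rw [sum_comm]
  exact sum_congr rfl fun _ _ => sum_congr rfl fun _ _ => by ring

theorem exists_rental_rounding {α C : Type*} [Fintype C] (E : Finset α) (P : C → Finset α)
    (hP : ∀ c, P c ⊆ E) (cost : α → ℝ) (hcost : ∀ e, 0 ≤ cost e) (p : C → ℝ)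
    (hp : ∀ c, 0 ≤ p c) (xb : C → α → ℝ) (hxb : ∀ c e, 0 ≤ xb c e) {k : ℝ} (hk : 0 ≤ k) :
    ∃ zb : C → α → ℝ, (∀ c e, zb c e = 0 ∨ zb c e = 1) ∧
      (∀ c, 1 ≤ k * ∑ e ∈ P c, xb c e → ∃ e ∈ P c, zb c e = 1) ∧
      ∑ e ∈ E, cost e * ∑ c, p c * zb c e ≤ k * ∑ e ∈ E, cost e * ∑ c, p c * xb c e := by
  classical
  set R : Set C := {c | 1 ≤ k * ∑ e ∈ P c, xb c e}
  have hne (c : C) (hc : c ∈ R) : (P c).Nonempty := by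
    refine nonempty_iff_ne_empty.2 fun h => ?_
    simp [R, h] at hc
    linarith
  choose cheapest hmem hcheap using fun c (hc : c ∈ R) =>
    (hne c hc).exists_mem_mul_sum_le_sum_mul cost (xb c) fun e _ => hxb c e
  set zb : C → α → ℝ := fun c e => if hc : c ∈ R then (if e = cheapest c hc then 1 else 0) else 0
  refine ⟨zb, fun c e => ?_,
    fun c hc => ⟨cheapest c hc, hmem c hc, by simp [zb, show c ∈ R from hc]⟩, ?_⟩
  · simp only [zb]
    split_ifs <;> simp
  have hclient (c : C) : ∑ e ∈ E, cost e * zb c e ≤ k * ∑ e ∈ E, cost e * xb c e := by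
    by_cases hc : c ∈ R
    · simp only [zb, hc, dite_true, mul_ite, mul_one, mul_zero, sum_ite_eq', hP c (hmem c hc),
        if_true]
      calc cost (cheapest c hc) ≤ cost (cheapest c hc) * (k * ∑ e ∈ P c, xb c e) :=
            le_mul_of_one_le_right (hcost _) hc
        _ = k * (cost (cheapest c hc) * ∑ e ∈ P c, xb c e) := by ring
        _ ≤ k * ∑ e ∈ P c, cost e * xb c e := mul_le_mul_of_nonneg_left (hcheap c hc) hk
        _ ≤ k * ∑ e ∈ E, cost e * xb c e := mul_le_mul_of_nonneg_left
            (sum_le_sum_of_subset_of_nonneg (hP c) fun e _ _ => mul_nonneg (hcost e) (hxb c e)) hk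
    · simpa [zb, hc] using
        mul_nonneg hk (sum_nonneg fun e _ => mul_nonneg (hcost e) (hxb c e))
  rw [sum_mul_sum_mul_comm, sum_mul_sum_mul_comm, mul_sum]
  exact sum_le_sum fun c _ => by
    simpa only [mul_left_comm k] using mul_le_mul_of_nonneg_left (hclient c) (hp c)

namespace SimpleGraph

variable {V : Type*} {G : SimpleGraph V}

lemma Walk.exists_mem_edges_not_isDiag_map {β : Type*} {f : V → β} {a b : V} (q : G.Walk a b)
    (h : f a ≠ f b) : ∃ e ∈ q.edges, ¬ (e.map f).IsDiag := by
  obtain ⟨d, hd, hfst, hsnd⟩ := q.exists_boundary_dart {v | f v = f a} rfl h.symm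
  refine ⟨d.edge, List.mem_map_of_mem hd, ?_⟩
  simp only [Set.mem_ofPred_eq] at hfst hsnd
  simp [Dart.edge, Sym2.mk_isDiag_iff, hfst, Ne.symm hsnd]

namespace IsTree

variable (hT : G.IsTree) (r : V)

noncomputable def rootPath (v : V) : G.Walk r v := (hT.existsUnique_path r v).choose

lemma isPath_rootPath (v : V) : (hT.rootPath r v).IsPath :=
  (hT.existsUnique_path r v).choose_spec.1

variable {hT r} in
lemma eq_rootPath {v : V} {q : G.Walk r v} (hq : q.IsPath) : q = hT.rootPath r v :=
  (hT.existsUnique_path r v).choose_spec.2 q hq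

def IsParent (u v : V) : Prop :=
  ∃ h : G.Adj u v, hT.rootPath r v = (hT.rootPath r u).concat h

noncomputable def rootDist (x : Sym2 V → ℝ) (v : V) : ℝ :=
  ((hT.rootPath r v).edges.map x).sum

lemma isParent_or_isParent {u v : V} (h : G.Adj u v) :
    hT.IsParent r u v ∨ hT.IsParent r v u := by
  classical
  by_cases hv : v ∈ (hT.rootPath r u).support
  · exact .inr ⟨h.symm, hT.isAcyclic.path_concat (hT.isPath_rootPath r v)
      (hT.isPath_rootPath r u) h.symm hv⟩
  · exact .inl ⟨h, (eq_rootPath ((hT.isPath_rootPath r u).concat hv h)).symm⟩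

lemma exists_isParent_of_mem_edgeSet {e : Sym2 V} (he : e ∈ G.edgeSet) :
    ∃ u v, hT.IsParent r u v ∧ s(u, v) = e := by
  induction e using Sym2.ind with
  | _ u v =>
    rcases hT.isParent_or_isParent r he with h | h
    · exact ⟨u, v, h, rfl⟩
    · exact ⟨v, u, h, Sym2.eq_swap⟩

variable {hT r} in
lemma IsParent.unique {a a' u : V} (h : hT.IsParent r a u) (h' : hT.IsParent r a' u) :
    a = a' := by
  obtain ⟨_, hu⟩ := h
  obtain ⟨_, hu'⟩ := h'
  exact (Walk.concat_inj (hu.symm.trans hu')).1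

variable {hT r} in
lemma IsParent.rootDist_eq {u v : V} (h : hT.IsParent r u v) (x : Sym2 V → ℝ) :
    hT.rootDist r x v = hT.rootDist r x u + x s(u, v) := by
  obtain ⟨_, hv⟩ := h
  simp [rootDist, hv, Walk.edges_concat]

lemma rootDist_eq_add_of_isParent_of_isPath (x : Sym2 V → ℝ) {a u b : V} (h : G.Adj a u)
    (q : G.Walk u b) (ha : hT.IsParent r a u) (hq : (Walk.cons h q).IsPath) :
    hT.rootDist r x b = hT.rootDist r x u + (q.edges.map x).sum := by
  induction q generalizing a with
  | nil => simp
  | @cons u u' b h' q ih =>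
    rcases hT.isParent_or_isParent r h' with hu | hu
    · rw [ih h' hu hq.of_cons, hu.rootDist_eq x]
      simp only [Walk.edges_cons, List.map_cons, List.sum_cons]
      ring
    · have : a ∉ (Walk.cons h' q).support := (Walk.cons_isPath_iff _ _).1 hq |>.2
      exact absurd (by simp [← hu.unique ha]) this

lemma exists_mem_support_sum_edges_eq (x : Sym2 V → ℝ) {a b : V} (q : G.Walk a b)
    (hq : q.IsPath) : ∃ m ∈ q.support, (q.edges.map x).sum =
      (hT.rootDist r x a - hT.rootDist r x m) + (hT.rootDist r x b - hT.rootDist r x m) := by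
  induction q with
  | nil => simp
  | @cons a u b h q ih =>
    rcases hT.isParent_or_isParent r h with ha | hu
    · refine ⟨a, Walk.start_mem_support _, ?_⟩
      rw [hT.rootDist_eq_add_of_isParent_of_isPath r x h q ha hq, ha.rootDist_eq x]
      simp only [Walk.edges_cons, List.map_cons, List.sum_cons]
      ring
    · obtain ⟨m, hm, hsum⟩ := ih hq.of_cons
      refine ⟨m, by simp [hm], ?_⟩
      rw [hu.rootDist_eq x, Sym2.eq_swap]
      simp only [Walk.edges_cons, List.map_cons, List.sum_cons, hsum]
      ring

noncomputable def level (x : Sym2 V → ℝ) (k θ : ℝ) (v : V) : ℤ :=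
  ⌊k * hT.rootDist r x v - θ⌋

noncomputable def levelCut (x : Sym2 V → ℝ) (k θ : ℝ) : Set (Sym2 V) :=
  {e | ¬ (e.map (hT.level r x k θ)).IsDiag}

lemma level_lt_level {x : Sym2 V → ℝ} {k : ℝ} (θ : ℝ) {u v : V}
    (huv : 1 ≤ k * hT.rootDist r x v - k * hT.rootDist r x u) :
    hT.level r x k θ u < hT.level r x k θ v := by
  rw [level, level, ← Int.add_one_le_iff, ← Int.floor_add_one]
  exact Int.floor_le_floor (by linarith)

lemma exists_mem_edges_mem_levelCut (x : Sym2 V → ℝ) (k θ : ℝ) {a b : V} (q : G.Walk a b)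
    (hq : q.IsPath) (hlen : 2 ≤ k * (q.edges.map x).sum) :
    ∃ e ∈ q.edges, e ∈ hT.levelCut r x k θ := by
  classical
  obtain ⟨m, hm, hsum⟩ := hT.exists_mem_support_sum_edges_eq r x q hq
  rcases le_or_gt 1 (k * hT.rootDist r x a - k * hT.rootDist r x m) with ha | ha
  · obtain ⟨e, he, hcut⟩ := (q.takeUntil m hm).exists_mem_edges_not_isDiag_map
      (hT.level_lt_level r θ ha).ne'
    exact ⟨e, q.edges_takeUntil_subset_edges hm he, hcut⟩
  · obtain ⟨e, he, hcut⟩ := (q.dropUntil m hm).exists_mem_edges_not_isDiag_map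
      (hT.level_lt_level r θ
        (by rw [hsum] at hlen; linarith : 1 ≤ k * hT.rootDist r x b - k * hT.rootDist r x m)).ne
    exact ⟨e, q.edges_dropUntil_subset_edges hm he, hcut⟩

lemma indicator_levelCut_le {x : Sym2 V → ℝ} (hx : ∀ e, 0 ≤ x e) {k : ℝ} (hk : 0 ≤ k) (θ : ℝ)
    {u v : V} (huv : hT.IsParent r u v) :
    (hT.levelCut r x k θ).indicator 1 s(u, v) ≤
      ((hT.level r x k θ v - hT.level r x k θ u : ℤ) : ℝ) := by
  have hle : hT.level r x k θ u ≤ hT.level r x k θ v :=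
    Int.floor_le_floor (by nlinarith [huv.rootDist_eq x, hx s(u, v)])
  by_cases h : hT.level r x k θ u = hT.level r x k θ v
  · rw [Set.indicator_of_notMem (by simpa [levelCut] using h), h, sub_self, Int.cast_zero]
  · rw [Set.indicator_of_mem (by simpa [levelCut] using h), Pi.one_apply]
    exact_mod_cast (by omega : 1 ≤ hT.level r x k θ v - hT.level r x k θ u)

theorem exists_multicut [Fintype V] [DecidableRel G.Adj] (hT : G.IsTree)
    (cost x : Sym2 V → ℝ) (hcost : ∀ e, 0 ≤ cost e) (hx : ∀ e, 0 ≤ x e) {k : ℝ} (hk : 0 ≤ k) :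
    ∃ z : Sym2 V → ℝ, (∀ e, z e = 0 ∨ z e = 1) ∧
      ∑ e ∈ G.edgeFinset, cost e * z e ≤ k * ∑ e ∈ G.edgeFinset, cost e * x e ∧
      ∀ ⦃a b : V⦄ (q : G.Walk a b), q.IsPath → 2 ≤ k * (q.edges.map x).sum →
        ∃ e ∈ q.edges, z e = 1 := by
  classical
  obtain ⟨r⟩ := hT.connected.nonempty
  have : Nonempty V := ⟨r⟩
  choose! u v huv using fun e (he : e ∈ G.edgeSet) => hT.exists_isParent_of_mem_edgeSet r he
  obtain ⟨θ, hθ⟩ := exists_sum_mul_floor_sub_sub_floor_sub_le G.edgeFinset cost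
    (fun e => k * hT.rootDist r x (u e)) (fun e => k * hT.rootDist r x (v e))
  refine ⟨(hT.levelCut r x k θ).indicator 1, fun e => ?_, ?_, fun a b q hq hlen => ?_⟩
  · by_cases he : e ∈ hT.levelCut r x k θ <;> simp [he]
  · refine le_trans (sum_le_sum fun e he => mul_le_mul_of_nonneg_left ?_ (hcost e)) (hθ.trans_eq ?_)
    · obtain ⟨hp, hs⟩ := huv e (mem_edgeFinset.1 he)
      simpa only [hs, level, Int.cast_sub] using hT.indicator_levelCut_le r hx hk θ hp
    · rw [mul_sum]
      refine sum_congr rfl fun e he => ?_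
      obtain ⟨hp, hs⟩ := huv e (mem_edgeFinset.1 he)
      rw [hp.rootDist_eq x, hs]
      ring
  · obtain ⟨e, he, hZ⟩ := hT.exists_mem_edges_mem_levelCut r x k θ q hq hlen
    exact ⟨e, he, Set.indicator_of_mem hZ 1⟩

end IsTree

end SimpleGraph

theorem stmt16_general {V : Type*} [Fintype V] [DecidableEq V]
    (G : SimpleGraph V) [DecidableRel G.Adj] (hT : G.IsTree)
    (cost : Sym2 V → ℝ) (hcost : ∀ e, 0 ≤ cost e)
    {C : Type*} [Fintype C]
    (s t : C → V)
    (p : C → ℝ) (hp0 : ∀ c, 0 ≤ p c)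
    (w : ∀ c : C, G.Walk (s c) (t c)) (hw : ∀ c, (w c).IsPath)
    (x : Sym2 V → ℝ) (xb : C → Sym2 V → ℝ)
    (hx : ∀ e, 0 ≤ x e) (hxb : ∀ c e, 0 ≤ xb c e)
    (hfeas : ∀ c : C, 1 ≤ ∑ e ∈ (w c).edges.toFinset, (x e + xb c e)) :
    ∃ z : Sym2 V → ℝ, ∃ zb : C → Sym2 V → ℝ,
      (∀ e, z e = 0 ∨ z e = 1) ∧ (∀ c e, zb c e = 0 ∨ zb c e = 1) ∧
      (∀ c : C, 1 ≤ ∑ e ∈ (w c).edges.toFinset, (z e + zb c e)) ∧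
      ∑ e ∈ G.edgeFinset, cost e * z e +
          ∑ e ∈ G.edgeFinset, cost e * ∑ c : C, p c * zb c e ≤
        3 * (∑ e ∈ G.edgeFinset, cost e * x e +
          ∑ e ∈ G.edgeFinset, cost e * ∑ c : C, p c * xb c e) := by
  obtain ⟨z, hz01, hz_cost, hz_cut⟩ := hT.exists_multicut cost x hcost hx (k := 3) (by norm_num)
  obtain ⟨zb, hzb01, hzb_cover, hzb_cost⟩ := exists_rental_rounding G.edgeFinset
    (fun c => (w c).edges.toFinset)
    (fun c _ he => SimpleGraph.mem_edgeFinset.2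
      ((w c).edges_subset_edgeSet (List.mem_toFinset.1 he)))
    cost hcost p hp0 xb hxb (k := 3) (by norm_num)
  refine ⟨z, zb, hz01, hzb01, fun c => ?_, by linarith⟩
  obtain ⟨e, he, hcut⟩ : ∃ e ∈ (w c).edges.toFinset, z e = 1 ∨ zb c e = 1 := by
    by_cases hbuy : 2 ≤ 3 * ∑ e ∈ (w c).edges.toFinset, x e
    · rw [List.sum_toFinset _ (hw c).edges_nodup] at hbuy
      obtain ⟨e, he, hze⟩ := hz_cut (w c) (hw c) hbuy
      exact ⟨e, List.mem_toFinset.2 he, .inl hze⟩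
    · have := hfeas c
      rw [sum_add_distrib] at this
      obtain ⟨e, he, hze⟩ := hzb_cover c (by linarith)
      exact ⟨e, he, .inr hze⟩
  have nonneg : ∀ a : ℝ, a = 0 ∨ a = 1 → 0 ≤ a := by rintro a (rfl | rfl) <;> norm_num
  calc (1 : ℝ) ≤ z e + zb c e := by
        rcases hcut with h | h <;> linarith [nonneg _ (hz01 e), nonneg _ (hzb01 c e)]
    _ ≤ ∑ e ∈ (w c).edges.toFinset, (z e + zb c e) :=
      single_le_sum (fun e _ => add_nonneg (nonneg _ (hz01 e)) (nonneg _ (hzb01 c e))) he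

/-- Rounding the rent-or-buy LP (LP-MC) for universal stochastic multicut on a tree `G`
to an integral solution losing at most a factor 3. For each client `c` with terminals
`s c ≠ t c`, `w c` is the (unique, since `G` is a tree) `s c`–`t c` path, and `P_c` is
its edge set `(w c).edges.toFinset`. -/
theorem stmt16 {V : Type*} [Fintype V] [DecidableEq V]
    (G : SimpleGraph V) [DecidableRel G.Adj] (hT : G.IsTree)
    (cost : Sym2 V → ℝ) (hcost : ∀ e, 0 ≤ cost e)
    {C : Type*} [Fintype C]
    (s t : C → V) (hst : ∀ c, s c ≠ t c)
    (p : C → ℝ) (hp0 : ∀ c, 0 ≤ p c) (hp1 : ∀ c, p c ≤ 1)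
    (w : ∀ c : C, G.Walk (s c) (t c)) (hw : ∀ c, (w c).IsPath)
    (x : Sym2 V → ℝ) (xb : C → Sym2 V → ℝ)
    (hx : ∀ e, 0 ≤ x e) (hxb : ∀ c e, 0 ≤ xb c e)
    (hfeas : ∀ c : C, 1 ≤ ∑ e ∈ (w c).edges.toFinset, (x e + xb c e)) :
    ∃ z : Sym2 V → ℝ, ∃ zb : C → Sym2 V → ℝ,
      (∀ e, z e = 0 ∨ z e = 1) ∧ (∀ c e, zb c e = 0 ∨ zb c e = 1) ∧
      (∀ c : C, 1 ≤ ∑ e ∈ (w c).edges.toFinset, (z e + zb c e)) ∧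
      ∑ e ∈ G.edgeFinset, cost e * z e +
          ∑ e ∈ G.edgeFinset, cost e * ∑ c : C, p c * zb c e ≤
        3 * (∑ e ∈ G.edgeFinset, cost e * x e +
          ∑ e ∈ G.edgeFinset, cost e * ∑ c : C, p c * xb c e) :=
  stmt16_general G hT cost hcost s t p hp0 w hw x xb hx hxb hfeas
end
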